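/- arXiv:2009.05125 — 9 statements merged into one kernel-verified Lean document; each statement's English description precedes it below -/
import Mathlib

section
/- For every natural number m and every complex number x, the series Σ_{n≥0} Surj(n,m)·x^n/n! converges absolutely and its sum equals (e^x − 1)^m. -/
/-- `Surj n m` is the number of surjective functions from `Fin n` to `Fin m`. -/
noncomputable def Surj (n m : ℕ) : ℕ :=
  Nat.card {f : Fin n → Fin m // Function.Surjective f}

/-!
Inclusion–exclusion over the set of missed values gives
`Surj n m = ∑_{t ⊆ Fin m} (-1)^|t| (m - |t|)^n`. Hence `Surj n m x^n / n!` is a finite signed sum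
of terms of the exponential series of `(m - |t|) x`, so the series sums to
`∑_t (-1)^|t| (e^x)^(m - |t|) = (e^x - 1)^m` by the binomial theorem. Absolute convergence
comes from `Surj n m ≤ m^n`, which bounds the terms by those of the series of `e^(m|x|)`.
-/

open Finset

section Counting

variable {α β : Type*} [Fintype α] [Fintype β] [DecidableEq α] [DecidableEq β]

theorem inf_filter_forall_ne_eq_piFinset (t : Finset β) :
    (t.inf fun b => univ.filter fun f : α → β => ∀ a, f a ≠ b) =
      Fintype.piFinset fun _ : α => tᶜ := by
  ext f
  simp only [mem_inf, mem_filter, mem_univ, true_and, Fintype.mem_piFinset, mem_compl]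
  exact ⟨fun h a ha => h (f a) ha a rfl, fun h b hb a hab => h a (hab ▸ hb)⟩

theorem card_surjective_eq_sum :
    (Fintype.card {f : α → β // Function.Surjective f} : ℤ) =
      ∑ t : Finset β, (-1 : ℤ) ^ #t * (#tᶜ : ℤ) ^ Fintype.card α := by
  have hsurj : (univ.inf fun b => (univ.filter fun f : α → β => ∀ a, f a ≠ b)ᶜ) =
      univ.filter fun f : α → β => Function.Surjective f := by
    ext f
    simp [mem_inf, Function.Surjective, eq_comm]
  rw [Fintype.card_subtype, ← hsurj, inclusion_exclusion_card_inf_compl, powerset_univ]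
  refine sum_congr rfl fun t _ => ?_
  rw [inf_filter_forall_ne_eq_piFinset, Fintype.card_piFinset, prod_const, card_univ]
  push_cast
  rfl

end Counting

theorem Surj_eq_sum (n m : ℕ) :
    (Surj n m : ℂ) = ∑ t : Finset (Fin m), (-1 : ℂ) ^ #t * ((m - #t : ℕ) : ℂ) ^ n := by
  have h := congrArg (Int.cast : ℤ → ℂ) (card_surjective_eq_sum (α := Fin n) (β := Fin m))
  push_cast [card_compl, Fintype.card_fin] at h
  rw [Surj, Nat.card_eq_fintype_card, h]

theorem Surj_le_pow (n m : ℕ) : Surj n m ≤ m ^ n := by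
  rw [Surj, Nat.card_eq_fintype_card]
  simpa using Fintype.card_subtype_le (fun f : Fin n → Fin m => Function.Surjective f)

theorem Complex.hasSum_pow_div_factorial (y : ℂ) :
    HasSum (fun n => y ^ n / n.factorial) (Complex.exp y) := by
  rw [Complex.exp_eq_exp_ℂ]
  exact NormedSpace.expSeries_div_hasSum_exp y

theorem summable_norm_Surj_mul_pow_div_factorial (m : ℕ) (x : ℂ) :
    Summable fun n : ℕ => ‖(Surj n m : ℂ) * x ^ n / n.factorial‖ := by
  refine .of_nonneg_of_le (fun n => norm_nonneg _) (fun n => ?_)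
    (Real.summable_pow_div_factorial (m * ‖x‖))
  have hSurj : (Surj n m : ℝ) ≤ (m : ℝ) ^ n := by exact_mod_cast Surj_le_pow n m
  rw [norm_div, norm_mul, Complex.norm_natCast, Complex.norm_natCast, norm_pow, mul_pow]
  gcongr

theorem hasSum_Surj_mul_pow_div_factorial (m : ℕ) (x : ℂ) :
    HasSum (fun n : ℕ => (Surj n m : ℂ) * x ^ n / n.factorial) ((Complex.exp x - 1) ^ m) := by
  have hterm (n : ℕ) : (Surj n m : ℂ) * x ^ n / n.factorial =
      ∑ t : Finset (Fin m), (-1 : ℂ) ^ #t * ((((m - #t : ℕ) : ℂ) * x) ^ n / n.factorial) := by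
    rw [Surj_eq_sum, sum_mul, sum_div]
    refine sum_congr rfl fun t _ => ?_
    ring
  have hsum : (Complex.exp x - 1) ^ m =
      ∑ t : Finset (Fin m), (-1 : ℂ) ^ #t * Complex.exp (((m - #t : ℕ) : ℂ) * x) := by
    simp_rw [Complex.exp_nat_mul]
    rw [sub_eq_neg_add, ← Fin.sum_pow_mul_eq_add_pow]
  rw [funext hterm, hsum]
  exact hasSum_sum fun t _ => (Complex.hasSum_pow_div_factorial _).mul_left _

/-- For every natural number `m` and every complex number `x`, the series
`Σ_{n≥0} Surj(n,m)·x^n/n!` converges absolutely and its sum equals `(e^x − 1)^m`. -/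
theorem stmt0 (m : ℕ) (x : ℂ) :
    Summable (fun n : ℕ => ‖(Surj n m : ℂ) * x ^ n / (Nat.factorial n : ℂ)‖) ∧
    ∑' n : ℕ, (Surj n m : ℂ) * x ^ n / (Nat.factorial n : ℂ) = (Complex.exp x - 1) ^ m :=
  ⟨summable_norm_Surj_mul_pow_div_factorial m x, (hasSum_Surj_mul_pow_div_factorial m x).tsum_eq⟩
end

section
/- Let a : ℕ × ℕ → ℂ and let R > 0 be a real number. Suppose that for every n the power series T_n(z) = Σ_{N≥0} a(n,N)·z^N converges absolutely for every complex z with |z| < R, and that for every real r₁ with 0 < r₁ < R one has Σ_{n≥0} sup_{|z| = r₁} |T_n(z)| < ∞. Then for every real r with 0 < r < R, Σ_{n,N≥0} |a(n,N)|·r^N < ∞. -/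
/-!
For `r < ρ < R`, Cauchy's estimate on the circle `|z| = ρ` gives
`|a(n,N)| ≤ M_n / ρ^N` with `M_n = sup_{|z| = ρ} |T_n(z)|`, so the double series is dominated
termwise by `Σ_{n,N} M_n (r/ρ)^N`, the product of a summable series and a convergent
geometric series.
-/

open Metric

namespace FormalMultilinearSeries

theorem ofReal_le_radius_ofScalars {c : ℕ → ℂ} {R : ℝ}
    (hc : ∀ z : ℂ, ‖z‖ < R → Summable fun N => ‖c N * z ^ N‖) :
    ENNReal.ofReal R ≤ (ofScalars ℂ c).radius := by
  refine ENNReal.le_of_forall_nnreal_lt fun ρ hρ => (ofScalars ℂ c).le_radius_of_summable_norm ?_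
  have hρR : (ρ : ℝ) < R := ENNReal.coe_lt_ofReal.1 hρ
  simpa [ofScalars_norm] using hc ρ (by simpa using hρR)

theorem norm_coeff_le_iSup_sphere_div_pow {c : ℕ → ℂ} {r : ℝ} (hr : 0 < r)
    (hrad : ENNReal.ofReal r < (ofScalars ℂ c).radius) (N : ℕ) :
    ‖c N‖ ≤ (⨆ z : sphere (0 : ℂ) r, ‖∑' n, c n * (z : ℂ) ^ n‖) / r ^ N := by
  set f : ℂ → ℂ := fun z => ∑' n, c n * z ^ n
  have hf : HasFPowerSeriesOnBall f (ofScalars ℂ c) 0 (ofScalars ℂ c).radius := by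
    convert (ofScalars ℂ c).hasFPowerSeriesOnBall (hrad.trans_le' bot_le) using 1
    ext z
    simp [f, FormalMultilinearSeries.sum, mul_comm]
  have hdiff : DifferentiableOn ℂ f (closedBall 0 r) := by
    refine hf.differentiableOn.mono fun z hz => ?_
    rw [Metric.mem_eball, edist_dist]
    exact (ENNReal.ofReal_le_ofReal hz).trans_lt hrad
  have hbdd : BddAbove (Set.range fun z : sphere (0 : ℂ) r => ‖f z‖) := by
    have h := ((isCompact_sphere (0 : ℂ) r).image_of_continuousOn
      (hdiff.continuousOn.mono sphere_subset_closedBall).norm).bddAbove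
    rwa [Set.image_eq_range] at h
  have hcoeff : c N = iteratedDeriv N f 0 / N.factorial :=
    congrFun (ofScalars_series_injective ℂ ℂ
      (hf.hasFPowerSeriesAt.eq_formalMultilinearSeries hf.analyticAt.hasFPowerSeriesAt)) N
  have hcauchy :
      ‖iteratedDeriv N f 0‖ ≤ N.factorial * (⨆ z : sphere (0 : ℂ) r, ‖f z‖) / r ^ N := by
    rw [← closure_ball (0 : ℂ) hr.ne'] at hdiff
    exact Complex.norm_iteratedDeriv_le_of_forall_mem_sphere_norm_le N hr hdiff.diffContOnCl
      fun z hz => le_ciSup hbdd ⟨z, hz⟩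
  rw [hcoeff, norm_div, Complex.norm_natCast, div_le_iff₀ (by positivity)]
  calc _ ≤ _ := hcauchy
    _ = _ := by ring

end FormalMultilinearSeries

open FormalMultilinearSeries

theorem summable_norm_mul_pow_of_norm_le_div_pow {E : Type*} [SeminormedAddCommGroup E]
    {a : ℕ × ℕ → E} {M : ℕ → ℝ} {r ρ : ℝ} (hr : 0 ≤ r) (hrρ : r < ρ) (hM : Summable M)
    (ha : ∀ n N, ‖a (n, N)‖ ≤ M n / ρ ^ N) :
    Summable fun p : ℕ × ℕ => ‖a p‖ * r ^ p.2 := by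
  have hρ : 0 < ρ := hr.trans_lt hrρ
  have hM₀ : 0 ≤ M := fun n => by simpa using (norm_nonneg _).trans (ha n 0)
  have hgeom : Summable fun N : ℕ => (r / ρ) ^ N :=
    summable_geometric_of_lt_one (by positivity) ((div_lt_one hρ).2 hrρ)
  refine (hM.mul_of_nonneg hgeom hM₀ fun N => by positivity).of_nonneg_of_le
    (fun p => by positivity) fun ⟨n, N⟩ => ?_
  calc ‖a (n, N)‖ * r ^ N ≤ M n / ρ ^ N * r ^ N := by gcongr; exact ha n N
    _ = M n * (r / ρ) ^ N := by rw [div_pow]; ring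

theorem stmt2_general (a : ℕ × ℕ → ℂ) (R : ℝ)
    (hconv : ∀ n : ℕ, ∀ z : ℂ, ‖z‖ < R → Summable (fun N : ℕ => ‖a (n, N) * z ^ N‖))
    (hsup : ∀ r₁ : ℝ, 0 < r₁ → r₁ < R →
      Summable (fun n : ℕ =>
        ⨆ z : Metric.sphere (0 : ℂ) r₁, ‖∑' N : ℕ, a (n, N) * (z : ℂ) ^ N‖)) :
    ∀ r : ℝ, 0 < r → r < R → Summable (fun p : ℕ × ℕ => ‖a p‖ * r ^ p.2) := by
  intro r hr hrR
  obtain ⟨ρ, hrρ, hρR⟩ := exists_between hrR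
  have hρ : 0 < ρ := hr.trans hrρ
  have hrad (n : ℕ) : ENNReal.ofReal ρ < (ofScalars ℂ fun N => a (n, N)).radius :=
    ((ENNReal.ofReal_lt_ofReal_iff_of_nonneg hρ.le).2 hρR).trans_le
      (ofReal_le_radius_ofScalars (hconv n))
  exact summable_norm_mul_pow_of_norm_le_div_pow hr.le hrρ (hsup ρ hρ hρR) fun n N =>
    norm_coeff_le_iSup_sphere_div_pow hρ (hrad n) N

/-- Let `a : ℕ × ℕ → ℂ` and `R > 0`. Suppose that for every `n` the power series
`T_n(z) = Σ_N a(n,N)·z^N` converges absolutely for `|z| < R`, and that for every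
`0 < r₁ < R` one has `Σ_n sup_{|z| = r₁} |T_n(z)| < ∞`. Then for every `0 < r < R`,
`Σ_{n,N} |a(n,N)|·r^N < ∞`. -/
theorem stmt2 (a : ℕ × ℕ → ℂ) (R : ℝ) (hR : 0 < R)
    (hconv : ∀ n : ℕ, ∀ z : ℂ, ‖z‖ < R → Summable (fun N : ℕ => ‖a (n, N) * z ^ N‖))
    (hsup : ∀ r₁ : ℝ, 0 < r₁ → r₁ < R →
      Summable (fun n : ℕ =>
        ⨆ z : Metric.sphere (0 : ℂ) r₁, ‖∑' N : ℕ, a (n, N) * (z : ℂ) ^ N‖)) :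
    ∀ r : ℝ, 0 < r → r < R → Summable (fun p : ℕ × ℕ => ‖a p‖ * r ^ p.2) :=
  stmt2_general a R hconv hsup
end

section
/- Let (a_N)_{N≥0} be a sequence of complex numbers with B := limsup_{N→∞} |a_N|^{1/N} < ∞. For each n ∈ ℕ set c_n := Σ_{N=0}^{n} (−1)^{N+n}·a_N·Surj(n,N) (a finite sum, since Surj(n,N) = 0 for N > n). Then for every complex number z with |z| < 1/(B+1), the series Σ_{n≥0} c_n·(−log(1−z))^n/n! converges absolutely and its sum equals Σ_{N≥0} a_N·z^N. -/
/-!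
Surjections have exponential generating function `∑ₙ Surj(n, N) xⁿ / n! = (eˣ - 1)^N`
(inclusion–exclusion over the missed values). For `w = -log (1 - z)` we have `1 - e^{-w} = z`,
so `a_N z^N` is the sum of row `N` of the double series
`∑_{N,n} (-1)^{N+n} a_N Surj(n, N) wⁿ / n!`, whose column `n` is the finite sum `c_n wⁿ / n!`.
The absolute row sums are `‖a_N‖ (e^{‖w‖} - 1)^N` with `e^{‖w‖} - 1 ≤ ‖z‖ / (1 - ‖z‖)`, and
`B ‖z‖ / (1 - ‖z‖) < 1` is exactly `‖z‖ < 1 / (B + 1)`; so the root test makes the double series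
absolutely convergent and the two orders of summation agree.
-/

open Filter

open Finset

theorem surj_eq_zero_of_lt {n m : ℕ} (h : n < m) : Surj n m = 0 := by
  have : IsEmpty {f : Fin n → Fin m // Function.Surjective f} :=
    ⟨fun ⟨f, hf⟩ => absurd (Fintype.card_le_of_surjective f hf) (by simpa using h)⟩
  simp [Surj]

theorem surj_eq_sum (n m : ℕ) :
    (Surj n m : ℤ) = ∑ k ∈ range (m + 1), (-1) ^ k * m.choose k * ((m - k : ℕ) : ℤ) ^ n := by
  classical
  let missing : Fin m → Finset (Fin n → Fin m) := fun i => {f | ∀ x, f x ≠ i}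
  have hsurj : Surj n m = #(univ.inf fun i => (missing i)ᶜ) := by
    rw [Surj, Nat.card_eq_fintype_card]
    exact Fintype.card_of_subtype _ fun f => by simp [missing, Function.Surjective, mem_inf]
  have hmissing (t : Finset (Fin m)) : #(t.inf missing) = (m - #t) ^ n := by
    have : t.inf missing = Fintype.piFinset fun _ => tᶜ := by
      ext f
      simp only [missing, mem_inf, Fintype.mem_piFinset, mem_compl, mem_filter, mem_univ,
        true_and]
      exact ⟨fun h x hx => h (f x) hx x rfl, fun h i hi x hfx => h x (hfx ▸ hi)⟩
    simp [this, Fintype.card_piFinset, card_compl]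
  rw [hsurj, inclusion_exclusion_card_inf_compl]
  simp_rw [hmissing, Nat.cast_pow]
  rw [sum_powerset_apply_card (fun k => (-1 : ℤ) ^ k * ((m - k : ℕ) : ℤ) ^ n), card_univ,
    Fintype.card_fin]
  refine sum_congr rfl fun k _ => ?_
  rw [Int.nsmul_eq_mul]
  ring

theorem hasSum_surj_mul_pow_div_factorial {𝔸 : Type*} [NormedField 𝔸] [NormedAlgebra ℚ 𝔸]
    [CompleteSpace 𝔸] (m : ℕ) (x : 𝔸) :
    HasSum (fun n => (Surj n m : 𝔸) * x ^ n / n.factorial) ((NormedSpace.exp x - 1) ^ m) := by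
  have hterm (k : ℕ) : HasSum (fun n => (-1) ^ k * m.choose k * (((m - k : ℕ) : 𝔸) * x) ^ n
      / n.factorial) ((-1) ^ k * m.choose k * NormedSpace.exp x ^ (m - k)) := by
    rw [← NormedSpace.exp_nsmul, nsmul_eq_mul]
    simpa only [mul_div_assoc] using
      (NormedSpace.expSeries_div_hasSum_exp _).mul_left ((-1 : 𝔸) ^ k * m.choose k)
  convert hasSum_sum fun k (_ : k ∈ range (m + 1)) => hterm k using 1
  · ext n
    have := congrArg (Int.cast : ℤ → 𝔸) (surj_eq_sum n m)
    push_cast at this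
    rw [this, sum_mul, sum_div]
    refine sum_congr rfl fun k _ => ?_
    ring
  · rw [sub_eq_neg_add, add_pow]
    refine sum_congr rfl fun k _ => ?_
    ring

theorem summable_norm_tsum_of_summable_norm_prod {α β E : Type*} [NormedAddCommGroup E]
    [CompleteSpace E] {f : α × β → E} (hf : Summable fun p => ‖f p‖) :
    Summable fun b => ‖∑' a, f (a, b)‖ :=
  hf.prod_symm.prod.of_nonneg_of_le (fun _ => norm_nonneg _)
    fun b => norm_tsum_le_tsum_norm (hf.prod_symm.prod_factor b)

theorem summable_norm_mul_pow_of_limsup_mul_lt {E : Type*} [SeminormedAddCommGroup E]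
    {a : ℕ → E} (hbdd : IsBoundedUnder (· ≤ ·) atTop fun N : ℕ => ‖a N‖ ^ (N : ℝ)⁻¹)
    {t : ℝ} (ht : 0 ≤ t) (hlt : limsup (fun N : ℕ => ‖a N‖ ^ (N : ℝ)⁻¹) atTop * t < 1) :
    Summable fun N => ‖a N‖ * t ^ N := by
  obtain ⟨R, hLR, hRt⟩ := (((continuous_mul_const t).tendsto _).eventually
    (gt_mem_nhds hlt)).exists_gt
  have hroot : ∀ᶠ N in atTop, ‖a N‖ ^ (N : ℝ)⁻¹ < R := eventually_lt_of_limsup_lt hLR hbdd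
  obtain ⟨N₀, hN₀⟩ := hroot.exists
  have hR : 0 ≤ R := (Real.rpow_nonneg (norm_nonneg _) _).trans hN₀.le
  refine Summable.of_norm_bounded_eventually_nat
    (summable_geometric_of_lt_one (mul_nonneg hR ht) hRt) ?_
  filter_upwards [hroot, eventually_ne_atTop 0] with N hN hN0
  calc ‖‖a N‖ * t ^ N‖ = (‖a N‖ ^ (N : ℝ)⁻¹) ^ N * t ^ N := by
        rw [Real.rpow_inv_natCast_pow (norm_nonneg _) hN0, Real.norm_of_nonneg (by positivity)]
    _ ≤ (R * t) ^ N := by rw [mul_pow]; gcongr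

theorem Complex.norm_log_one_sub_le {z : ℂ} (hz : ‖z‖ < 1) :
    ‖log (1 - z)‖ ≤ -Real.log (1 - ‖z‖) := by
  have hreal : HasSum (fun n : ℕ => ‖z‖ ^ n / n) (-Real.log (1 - ‖z‖)) := by
    rw [← hasSum_nat_add_iff' 1]
    simpa using Real.hasSum_pow_div_log_of_abs_lt_one (by rwa [abs_norm])
  rw [← norm_neg]
  exact (hasSum_taylorSeries_neg_log hz).norm_le_of_bounded hreal fun n => by simp

theorem summable_norm_and_tsum_eq_of_surj_transform (a c : ℕ → ℂ)
    (hc : ∀ n : ℕ, c n = ∑ N ∈ range (n + 1), (-1 : ℂ) ^ (N + n) * a N * (Surj n N : ℂ))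
    (w : ℂ) (ha : Summable fun N => ‖a N‖ * (Real.exp ‖w‖ - 1) ^ N) :
    Summable (fun n => ‖c n * w ^ n / n.factorial‖) ∧
      ∑' n, c n * w ^ n / n.factorial = ∑' N, a N * (1 - Complex.exp (-w)) ^ N := by
  set g : ℕ × ℕ → ℂ := fun p =>
    (-1) ^ (p.1 + p.2) * a p.1 * (Surj p.2 p.1 : ℂ) * w ^ p.2 / p.2.factorial
  have hrow_norm (N : ℕ) : HasSum (fun n => ‖g (N, n)‖) (‖a N‖ * (Real.exp ‖w‖ - 1) ^ N) := by
    rw [Real.exp_eq_exp_ℝ]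
    refine ((hasSum_surj_mul_pow_div_factorial N ‖w‖).mul_left ‖a N‖).congr_fun fun n => ?_
    simp [g, mul_div_assoc, mul_assoc]
  have hrow (N : ℕ) : HasSum (fun n => g (N, n)) (a N * (1 - Complex.exp (-w)) ^ N) := by
    -- `(-1)^(N+n) wⁿ = (-1)^N (-w)ⁿ` and `(1 - e^{-w})^N = (-1)^N (e^{-w} - 1)^N`
    rw [Complex.exp_eq_exp_ℂ, ← neg_sub, neg_pow, ← mul_assoc, mul_comm (a N)]
    refine ((hasSum_surj_mul_pow_div_factorial N (-w)).mul_left _).congr_fun fun n => ?_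
    simp only [g, pow_add, neg_pow w]
    ring_nf
  have hcol (n : ℕ) : ∑' N, g (N, n) = c n * w ^ n / n.factorial := by
    rw [tsum_eq_sum (s := range (n + 1)), hc, sum_mul, sum_div]
    intro N hN
    simp [g, surj_eq_zero_of_lt (by simpa using hN : n < N)]
  have hg : Summable fun p => ‖g p‖ :=
    (summable_prod_of_nonneg fun _ => norm_nonneg _).2
      ⟨fun N => (hrow_norm N).summable, ha.congr fun N => (hrow_norm N).tsum_eq.symm⟩
  refine ⟨by simpa only [hcol] using summable_norm_tsum_of_summable_norm_prod hg, ?_⟩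
  calc ∑' n, c n * w ^ n / n.factorial = ∑' n, ∑' N, g (N, n) := by simp only [hcol]
    _ = ∑' N, ∑' n, g (N, n) := hg.of_norm.tsum_comm
    _ = ∑' N, a N * (1 - Complex.exp (-w)) ^ N := tsum_congr fun N => (hrow N).tsum_eq

/-- Let `(a_N)` be a sequence of complex numbers with
`B := limsup |a_N|^{1/N} < ∞` (i.e. the sequence `|a_N|^{1/N}` is bounded above and its
limsup equals the real number `B`). Set
`c_n := Σ_{N=0}^{n} (−1)^{N+n}·a_N·Surj(n,N)`. Then for every complex `z` with
`|z| < 1/(B+1)`, the series `Σ_n c_n·(−log(1−z))^n/n!` converges absolutely and its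
sum equals `Σ_N a_N·z^N`. -/
theorem stmt3 (a : ℕ → ℂ) (B : ℝ)
    (hbdd : IsBoundedUnder (· ≤ ·) atTop (fun N : ℕ => ‖a N‖ ^ ((N : ℝ)⁻¹)))
    (hB : Filter.limsup (fun N : ℕ => ‖a N‖ ^ ((N : ℝ)⁻¹)) atTop = B)
    (c : ℕ → ℂ)
    (hc : ∀ n : ℕ, c n = ∑ N ∈ Finset.range (n + 1), (-1 : ℂ) ^ (N + n) * a N * (Surj n N : ℂ))
    (z : ℂ) (hz : ‖z‖ < 1 / (B + 1)) :
    Summable (fun n : ℕ =>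
      ‖c n * (-Complex.log (1 - z)) ^ n / (Nat.factorial n : ℂ)‖) ∧
    ∑' n : ℕ, c n * (-Complex.log (1 - z)) ^ n / (Nat.factorial n : ℂ) =
      ∑' N : ℕ, a N * z ^ N := by
  have hB0 : 0 ≤ B :=
    hB ▸ le_limsup_of_frequently_le (.of_forall fun N => by positivity) hbdd
  have hzB : ‖z‖ * (B + 1) < 1 := by rwa [lt_div_iff₀ (by positivity)] at hz
  have hz1 : ‖z‖ < 1 := by nlinarith [norm_nonneg z]
  have hpos : 0 < 1 - ‖z‖ := sub_pos.2 hz1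
  set w := -Complex.log (1 - z)
  have hexp : Real.exp ‖w‖ ≤ (1 - ‖z‖)⁻¹ := by
    simpa [w, Real.exp_neg, Real.exp_log hpos] using
      Real.exp_le_exp.2 (Complex.norm_log_one_sub_le hz1)
  have hBt : B * (Real.exp ‖w‖ - 1) < 1 := calc
    B * (Real.exp ‖w‖ - 1) ≤ B * ((1 - ‖z‖)⁻¹ - 1) := by gcongr
    _ = B * ‖z‖ / (1 - ‖z‖) := by field_simp [hpos.ne']; ring
    _ < 1 := by rw [div_lt_one hpos]; linarith
  obtain ⟨hsum, htsum⟩ := summable_norm_and_tsum_eq_of_surj_transform a c hc w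
    (summable_norm_mul_pow_of_limsup_mul_lt hbdd
      (sub_nonneg.2 (Real.one_le_exp (norm_nonneg w))) (hB ▸ hBt))
  refine ⟨hsum, htsum.trans ?_⟩
  rw [neg_neg, Complex.exp_log (sub_ne_zero.2 (ne_of_apply_ne norm (by simp [hz1.ne']))),
    sub_sub_cancel]
end

section
/- In the complex vector space of functions from the open unit disk {z ∈ ℂ : |z| < 1} to ℂ, the family (ℓ_r)_{r≥1} is linearly independent over ℂ, and the family consisting of the constant function 1 together with (exp ∘ ℓ_r)_{r≥1} is linearly independent over ℂ. -/
/-!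
Near `0`, `ℓ_1(z) = γ z + O(z²)` and `ℓ_k(z) = ζ(k) z^k + O(z^{2k})` for `k ≥ 2`: the tails are
power series with bounded coefficients, since `|ζ(m)| ≤ ζ(2)` for `m ≥ 2`. As `γ` and `ζ(k)` are
nonzero, `ℓ_k` and `exp ∘ ℓ_k - 1` are both asymptotic to a nonzero multiple of `z^k`. Functions
asymptotic to nonzero multiples of pairwise distinct powers of `z` are linearly independent, because
in a vanishing combination the term of least order dominates all the others. Applied to the
constant `1 = z^0` together with the `exp ∘ ℓ_k - 1`, this gives the second family up to a
unitriangular change of basis.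
-/

/-- `ℓ_k(z)`: for `k = 1`, `ℓ_1(z) = γ·z − Σ_{n≥2} ζ(n)·(−z)^n/n`; for `k ≥ 2`,
`ℓ_k(z) = −Σ_{n≥1} ζ(kn)·(−z^k)^n/n` (both series converge absolutely for `|z| < 1`). -/
noncomputable def ell (k : ℕ) (z : ℂ) : ℂ :=
  if k = 1 then
    (Real.eulerMascheroniConstant : ℂ) * z
      - ∑' n : ℕ, riemannZeta ((n : ℂ) + 2) * (-z) ^ (n + 2) / ((n : ℂ) + 2)
  else
    - ∑' n : ℕ, riemannZeta ((k : ℂ) * ((n : ℂ) + 1)) * (-z ^ k) ^ (n + 1) / ((n : ℂ) + 1)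

open Filter Topology Asymptotics Function

theorem linearIndependent_of_isEquivalent_pow {𝕜 X ι : Type*} [NormedField 𝕜] {l : Filter X}
    {φ : X → 𝕜} (hφ : Tendsto φ l (𝓝 0)) (hφ0 : ∃ᶠ x in l, φ x ≠ 0)
    {f : ι → X → 𝕜} {a : ι → 𝕜} {e : ι → ℕ} (he : Injective e) (ha : ∀ i, a i ≠ 0)
    (hf : ∀ i, f i ~[l] fun x => a i * φ x ^ e i) : LinearIndependent 𝕜 f := by
  classical
  rw [linearIndependent_iff]
  intro c hc
  by_contra hc0
  obtain ⟨m, hm, hmin⟩ := c.support.exists_min_image e (Finsupp.support_nonempty_iff.2 hc0)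
  have hcam : c m * a m ≠ 0 := mul_ne_zero (Finsupp.mem_support_iff.1 hm) (ha m)
  have hlead : c m • f m ~[l] fun x => c m * a m * φ x ^ e m := by
    have h := (IsEquivalent.refl (u := fun _ => c m)).smul (hf m)
    simp only [smul_eq_mul, ← mul_assoc] at h
    exact h
  have hrest : (∑ i ∈ c.support.erase m, c i • f i) =o[l] fun x => c m * a m * φ x ^ e m := by
    refine IsLittleO.sum fun i hi => ?_
    have hlt : e m < e i := (hmin i (Finset.mem_of_mem_erase hi)).lt_of_ne
      (he.ne (Finset.ne_of_mem_erase hi).symm)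
    have hfi : (c i • f i) =O[l] fun x => φ x ^ e i :=
      ((hf i).isBigO.trans (isBigO_const_mul_self _ _ _)).const_smul_left (c i)
    have hpow : (fun x => φ x ^ e i) =o[l] fun x => φ x ^ e m :=
      (isLittleO_pow_pow hlt).comp_tendsto hφ
    exact hfi.trans_isLittleO (hpow.trans_isBigO (isBigO_self_const_mul hcam _ _))
  have hsum : c m • f m + ∑ i ∈ c.support.erase m, c i • f i = 0 := by
    rw [Finsupp.linearCombination_apply, Finsupp.sum] at hc
    rwa [Finset.add_sum_erase _ (fun i => c i • f i) hm]
  have hzero : (fun x => c m * a m * φ x ^ e m) =ᶠ[l] 0 :=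
    isEquivalent_zero_iff_eventually_zero.1 (hsum ▸ hlead.add_isLittleO hrest).symm
  obtain ⟨x, hx, hφx⟩ := (hzero.and_frequently hφ0).exists
  exact mul_ne_zero hcam (pow_ne_zero _ hφx) hx

theorem linearIndependent_restrict_of_isEquivalent_pow {𝕜 ι : Type*} [NontriviallyNormedField 𝕜]
    {U : Set 𝕜} (hU : U ∈ 𝓝 0) {f : ι → 𝕜 → 𝕜} {a : ι → 𝕜} {e : ι → ℕ} (he : Injective e)
    (ha : ∀ i, a i ≠ 0) (hf : ∀ i, f i ~[𝓝 0] fun z => a i * z ^ e i) :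
    LinearIndependent 𝕜 fun i (z : U) => f i z := by
  have : (comap ((↑) : U → 𝕜) (𝓝[≠] 0)).NeBot :=
    comap_coe_neBot_of_le_principal (le_principal_iff.2 (mem_nhdsWithin_of_mem_nhds hU))
  have hval : Tendsto ((↑) : U → 𝕜) (comap (↑) (𝓝[≠] (0 : 𝕜))) (𝓝 0) :=
    tendsto_comap.mono_right nhdsWithin_le_nhds
  exact linearIndependent_of_isEquivalent_pow hval
    ((tendsto_comap (f := ((↑) : U → 𝕜))).eventually self_mem_nhdsWithin).frequently he ha
    fun i => (hf i).comp_tendsto hval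

theorem linearIndependent_restrict_option_of_isEquivalent_pow {𝕜 ι : Type*}
    [NontriviallyNormedField 𝕜] {U : Set 𝕜} (hU : U ∈ 𝓝 0) {f : ι → 𝕜 → 𝕜} {a : ι → 𝕜}
    {e : ι → ℕ} (he : Injective e) (he0 : ∀ i, e i ≠ 0) (ha : ∀ i, a i ≠ 0)
    (hf : ∀ i, (fun z => f i z - 1) ~[𝓝 0] fun z => a i * z ^ e i) :
    LinearIndependent 𝕜 fun (i : Option ι) (z : U) => i.elim 1 fun j => f j z := by
  have h := linearIndependent_restrict_of_isEquivalent_pow hU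
    (f := fun (i : Option ι) z => i.elim 1 fun j => f j z - 1) (a := fun i => i.elim 1 a)
    (e := fun i => i.elim 0 e) ?_ (by rintro (_ | j); exacts [one_ne_zero, ha j]) ?_
  · rw [← linearIndependent_add_smul_iff (i := none) (c := fun i => i.elim 0 fun _ => 1) rfl] at h
    -- the two sides carry different, defeq, instance paths for `LinearIndependent`
    convert (preTransparency := .instances) h using 1
    ext (_ | j) z <;> simp
  · rintro (_ | i) (_ | j) h <;> simp_all [he.eq_iff, eq_comm]
  · rintro (_ | j)
    · simpa using IsEquivalent.refl
    · exact hf j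

section PowerSeries

variable {𝕜 : Type*} [NormedField 𝕜] {c : ℕ → 𝕜} {C : ℝ}

lemma summable_mul_pow_of_norm_le [CompleteSpace 𝕜] (hc : ∀ n, ‖c n‖ ≤ C) {w : 𝕜} (hw : ‖w‖ < 1) :
    Summable fun n => c n * w ^ n := by
  refine .of_norm_bounded ((summable_geometric_of_lt_one (norm_nonneg w) hw).mul_left C) fun n => ?_
  rw [norm_mul, norm_pow]
  exact mul_le_mul_of_nonneg_right (hc n) (by positivity)

lemma isBigO_tsum_mul_pow_one (hc : ∀ n, ‖c n‖ ≤ C) :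
    (fun w => ∑' n, c n * w ^ n) =O[𝓝 0] fun _ => (1 : 𝕜) := by
  refine IsBigO.of_bound (2 * C) ?_
  filter_upwards [Metric.closedBall_mem_nhds (0 : 𝕜) one_half_pos] with w hw
  rw [mem_closedBall_zero_iff] at hw
  have hgeom : HasSum (fun n : ℕ => C * (1 / 2) ^ n) (2 * C) := by
    simpa only [mul_comm] using hasSum_geometric_two.mul_left C
  rw [norm_one, mul_one]
  refine tsum_of_norm_bounded hgeom fun n => ?_
  rw [norm_mul, norm_pow]
  exact mul_le_mul (hc n) (pow_le_pow_left₀ (norm_nonneg w) hw n) (by positivity)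
    ((norm_nonneg _).trans (hc n))

end PowerSeries

lemma exists_norm_riemannZeta_div_le :
    ∃ C, ∀ m : ℕ, 2 ≤ m → ∀ n : ℕ, ‖riemannZeta m / (n + 1)‖ ≤ C := by
  refine ⟨∑' n : ℕ, 1 / (n : ℝ) ^ 2, fun m hm n => ?_⟩
  have hζ : ‖riemannZeta m‖ ≤ ∑' n : ℕ, 1 / (n : ℝ) ^ 2 := by
    rw [zeta_nat_eq_tsum_of_gt_one hm]
    refine tsum_of_norm_bounded (Real.summable_one_div_nat_pow.2 one_lt_two).hasSum fun j => ?_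
    rw [norm_div, norm_one, norm_pow, Complex.norm_natCast]
    rcases j.eq_zero_or_pos with rfl | hj
    · simp [zero_pow (by omega : m ≠ 0)]
    · gcongr
      exact_mod_cast hj
  calc ‖riemannZeta m / (n + 1)‖ ≤ ‖riemannZeta m‖ := by
        rw [norm_div]
        refine div_le_self (norm_nonneg _) ?_
        rw [← Nat.cast_add_one, Complex.norm_natCast]
        exact_mod_cast n.succ_pos
    _ ≤ _ := hζ

noncomputable def ellLeadingCoeff (k : ℕ) : ℂ :=
  if k = 1 then (Real.eulerMascheroniConstant : ℂ) else riemannZeta k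

lemma ellLeadingCoeff_ne_zero {k : ℕ} (hk : 1 ≤ k) : ellLeadingCoeff k ≠ 0 := by
  unfold ellLeadingCoeff
  split_ifs with hk1
  · exact Complex.ofReal_ne_zero.2
      (one_half_pos.trans Real.one_half_lt_eulerMascheroniConstant).ne'
  · refine riemannZeta_ne_zero_of_one_lt_re ?_
    rw [Complex.natCast_re]
    exact_mod_cast (by omega : 1 < k)

noncomputable def ellCoeff (k n : ℕ) : ℂ := riemannZeta (k * (n + 2) : ℕ) / (n + 2)

lemma ell_eq {k : ℕ} (hk : 1 ≤ k) {z : ℂ} (hz : ‖z‖ < 1) :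
    ell k z = ellLeadingCoeff k * z ^ k - z ^ (2 * k) * ∑' n, ellCoeff k n * (-z ^ k) ^ n := by
  rcases hk.eq_or_lt with rfl | hk
  · rw [ell, if_pos rfl, ellLeadingCoeff, if_pos rfl, ← tsum_mul_left]
    congr 1
    · ring
    · refine tsum_congr fun n => ?_
      simp only [ellCoeff]
      push_cast [one_mul]
      ring
  · obtain ⟨C, hC⟩ := exists_norm_riemannZeta_div_le
    have hw : ‖-z ^ k‖ < 1 := by
      rw [norm_neg, norm_pow]; exact pow_lt_one₀ (norm_nonneg z) hz (by omega)
    have hs : Summable fun n : ℕ =>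
        riemannZeta ((k : ℂ) * ((n : ℂ) + 1)) * (-z ^ k) ^ (n + 1) / ((n : ℂ) + 1) := by
      have hcoeff (n : ℕ) : ‖riemannZeta (k * (n + 1) : ℕ) / (n + 1)‖ ≤ C :=
        hC (k * (n + 1)) (by nlinarith) n
      refine ((summable_mul_pow_of_norm_le hcoeff hw).mul_right (-z ^ k)).congr fun n => ?_
      push_cast
      ring
    rw [ell, if_neg hk.ne', ellLeadingCoeff, if_neg hk.ne', hs.tsum_eq_zero_add, ← tsum_mul_left]
    rw [neg_add, sub_eq_add_neg]
    congr 1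
    · simp
    · congr 1
      refine tsum_congr fun n => ?_
      rw [ellCoeff]
      push_cast
      rw [show (n : ℂ) + 1 + 1 = n + 2 by ring]
      ring

lemma isBigO_ell_sub {k : ℕ} (hk : 1 ≤ k) :
    (fun z => ell k z - ellLeadingCoeff k * z ^ k) =O[𝓝 0] fun z => z ^ (2 * k) := by
  obtain ⟨C, hC⟩ := exists_norm_riemannZeta_div_le
  have hcoeff (n : ℕ) : ‖ellCoeff k n‖ ≤ C := by
    simpa [ellCoeff, add_assoc, one_add_one_eq_two] using hC (k * (n + 2)) (by nlinarith) (n + 1)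
  have hw : Tendsto (fun z : ℂ => -z ^ k) (𝓝 0) (𝓝 0) := by
    simpa [zero_pow (by omega : k ≠ 0)] using
      (show Continuous fun z : ℂ => -z ^ k by fun_prop).tendsto 0
  have htail := (isBigO_refl (fun z : ℂ => z ^ (2 * k)) (𝓝 0)).mul
    ((isBigO_tsum_mul_pow_one hcoeff).comp_tendsto hw)
  refine htail.neg_left.congr' ?_ (.of_forall fun z => by simp)
  filter_upwards [Metric.ball_mem_nhds (0 : ℂ) one_pos] with z hz
  rw [mem_ball_zero_iff] at hz
  simp [ell_eq hk hz]

lemma isEquivalent_ell {k : ℕ} (hk : 1 ≤ k) : ell k ~[𝓝 0] fun z => ellLeadingCoeff k * z ^ k :=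
  ((isBigO_ell_sub hk).trans_isLittleO (isLittleO_pow_pow (by omega : k < 2 * k))).trans_isBigO
    (isBigO_self_const_mul (ellLeadingCoeff_ne_zero hk) _ _)

lemma isEquivalent_exp_sub_one : (fun w : ℂ => Complex.exp w - 1) ~[𝓝 0] id := by
  have h := hasDerivAt_iff_isLittleO_nhds_zero.1 (Complex.hasDerivAt_exp 0)
  show (fun w => Complex.exp w - 1 - w) =o[𝓝 0] fun w => w
  simpa using h

lemma isEquivalent_exp_ell_sub_one {k : ℕ} (hk : 1 ≤ k) :
    (fun z => Complex.exp (ell k z) - 1) ~[𝓝 0] fun z => ellLeadingCoeff k * z ^ k := by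
  have hell := isEquivalent_ell hk
  have h0 : Tendsto (ell k) (𝓝 0) (𝓝 0) :=
    hell.symm.tendsto_nhds (by simpa [zero_pow (by omega : k ≠ 0)] using
      ((continuous_pow k).const_mul (ellLeadingCoeff k)).tendsto (0 : ℂ))
  exact (isEquivalent_exp_sub_one.comp_tendsto h0).trans hell

/-- In the complex vector space of functions from the open unit disk to `ℂ`, the
family `(ℓ_r)_{r≥1}` is linearly independent over `ℂ`, and the family consisting of
the constant function `1` together with `(exp ∘ ℓ_r)_{r≥1}` is linearly independent
over `ℂ`. -/
theorem stmt10 :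
    LinearIndependent ℂ
      (fun (n : ℕ) => fun z : Metric.ball (0 : ℂ) 1 => ell (n + 1) (z : ℂ)) ∧
    LinearIndependent ℂ
      (fun (i : Option ℕ) => fun z : Metric.ball (0 : ℂ) 1 =>
        i.elim (1 : ℂ) (fun n => Complex.exp (ell (n + 1) (z : ℂ)))) := by
  have hU : Metric.ball (0 : ℂ) 1 ∈ 𝓝 0 := Metric.ball_mem_nhds 0 one_pos
  have hk (n : ℕ) : 1 ≤ n + 1 := Nat.le_add_left 1 n
  exact ⟨linearIndependent_restrict_of_isEquivalent_pow hU (add_left_injective 1)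
      (fun n => ellLeadingCoeff_ne_zero (hk n)) fun n => isEquivalent_ell (hk n),
    linearIndependent_restrict_option_of_isEquivalent_pow hU
      (f := fun n z => Complex.exp (ell (n + 1) z)) (add_left_injective 1)
      (fun n => n.succ_ne_zero) (fun n => ellLeadingCoeff_ne_zero (hk n))
      fun n => isEquivalent_exp_ell_sub_one (hk n)⟩
end

section
/- Let r ≥ 1 be an integer, let ρ be a complex number with ρ^{2r} = −1, and let ξ be a primitive 2r-th root of unity. Then for every complex number z with |z| < 1, exp(ℓ_{2r}(z)) = exp(ℓ_r(ρ·z)) · exp(ℓ_r(ρ·ξ·z)). -/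
/-! Put `u = (ρz)^r`. Since `ξ^r = -1`, the two factors on the right are the exponentials of
minus the series `Σ ζ(rn) v^n / n` at `v = u` and `v = -u` (for `r = 1` up to linear terms that
cancel). Adding them kills the odd powers and doubles the even ones, which gives
`Σ ζ(2rm) (u²)^m / m`; and `u² = ρ^{2r} z^{2r} = -z^{2r}`, so this is `-ℓ_{2r}(z)`. -/

open Complex Real

theorem norm_riemannZeta_natCast_le {m : ℕ} (hm : 2 ≤ m) : ‖riemannZeta m‖ ≤ π ^ 2 / 6 := by
  rw [zeta_nat_eq_tsum_of_gt_one hm]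
  refine tsum_of_norm_bounded hasSum_zeta_two fun n => ?_
  rcases n.eq_zero_or_pos with rfl | hn
  · simp [zero_pow (by omega : m ≠ 0)]
  · rw [norm_div, norm_one, norm_pow, Complex.norm_natCast]
    exact one_div_le_one_div_of_le (by positivity)
      (pow_le_pow_right₀ (by exact_mod_cast hn) hm)

noncomputable def zetaLogSeries (k : ℕ) (w : ℂ) : ℂ :=
  ∑' n : ℕ, riemannZeta ((k : ℂ) * ((n : ℂ) + 1)) * w ^ (n + 1) / ((n : ℂ) + 1)

theorem summable_zetaLogSeries {k : ℕ} (hk : k ≠ 0) {w : ℂ} (hw : ‖w‖ < 1) :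
    Summable fun n : ℕ => riemannZeta ((k : ℂ) * ((n : ℂ) + 1)) * w ^ (n + 1) / ((n : ℂ) + 1) := by
  refine .of_norm_bounded_eventually_nat
    ((summable_geometric_of_lt_one (norm_nonneg w) hw).mul_left (π ^ 2 / 6 * ‖w‖)) ?_
  filter_upwards [Filter.eventually_ge_atTop 1] with n hn
  have hζ : ‖riemannZeta ((k : ℂ) * ((n : ℂ) + 1))‖ ≤ π ^ 2 / 6 := by
    exact_mod_cast norm_riemannZeta_natCast_le (m := k * (n + 1))
      (by nlinarith [Nat.pos_of_ne_zero hk])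
  have hden : 1 ≤ ‖(n : ℂ) + 1‖ := by
    rw [← Nat.cast_add_one, Complex.norm_natCast]
    exact_mod_cast n.succ_pos
  rw [norm_div, norm_mul, norm_pow, pow_succ]
  calc _ ≤ ‖riemannZeta ((k : ℂ) * ((n : ℂ) + 1))‖ * (‖w‖ ^ n * ‖w‖) :=
        div_le_self (by positivity) hden
    _ ≤ π ^ 2 / 6 * (‖w‖ ^ n * ‖w‖) := by gcongr
    _ = π ^ 2 / 6 * ‖w‖ * ‖w‖ ^ n := by ring

theorem hasSum_zetaLogSeries {k : ℕ} (hk : k ≠ 0) {w : ℂ} (hw : ‖w‖ < 1) :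
    HasSum (fun n : ℕ => riemannZeta ((k : ℂ) * ((n : ℂ) + 1)) * w ^ (n + 1) / ((n : ℂ) + 1))
      (zetaLogSeries k w) :=
  (summable_zetaLogSeries hk hw).hasSum

theorem zetaLogSeries_add_zetaLogSeries_neg {k : ℕ} (hk : k ≠ 0) {w : ℂ} (hw : ‖w‖ < 1) :
    zetaLogSeries k w + zetaLogSeries k (-w) = zetaLogSeries (2 * k) (w ^ 2) := by
  refine ((hasSum_zetaLogSeries hk hw).add
    (hasSum_zetaLogSeries hk (w := -w) (by rwa [norm_neg]))).unique ?_
  rw [← zero_add (zetaLogSeries _ _)]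
  refine HasSum.even_add_odd ?_ ?_
  · convert hasSum_zero with m
    rw [Odd.neg_pow ⟨m, rfl⟩, mul_neg, neg_div, add_neg_cancel]
  · convert hasSum_zetaLogSeries (by omega : 2 * k ≠ 0) (w := w ^ 2)
      (by rw [norm_pow]; exact pow_lt_one₀ (norm_nonneg w) hw two_ne_zero) using 2 with m
    have hexp : ((2 * m + 1 : ℕ) : ℂ) + 1 = 2 * ((m : ℂ) + 1) := by push_cast; ring
    rw [Even.neg_pow ⟨m + 1, by ring⟩, ← pow_mul, hexp, mul_left_comm, Nat.cast_mul, Nat.cast_ofNat,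
      show 2 * m + 1 + 1 = 2 * (m + 1) by ring]
    field_simp
    ring

theorem ell_of_ne_one {k : ℕ} (hk : k ≠ 1) (w : ℂ) : ell k w = -zetaLogSeries k (-w ^ k) :=
  if_neg hk

/-- `riemannZeta 1` is Mathlib's finite junk value at the pole; being the coefficient of a
linear term, it cancels in `ell 1 a + ell 1 (-a)`. -/
theorem ell_one {w : ℂ} (hw : ‖w‖ < 1) :
    ell 1 w = ((eulerMascheroniConstant : ℂ) - riemannZeta 1) * w - zetaLogSeries 1 (-w) := by
  rw [ell, if_pos rfl, zetaLogSeries,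
    (hasSum_zetaLogSeries one_ne_zero (w := -w) (by rwa [norm_neg])).summable.tsum_eq_zero_add]
  push_cast
  ring_nf

theorem ell_add_ell_of_pow_eq_neg_pow {r : ℕ} (hr : r ≠ 0) {a b : ℂ} (ha : ‖a‖ < 1)
    (hab : b ^ r = -a ^ r) : ell r a + ell r b = -zetaLogSeries (2 * r) (a ^ (2 * r)) := by
  rw [pow_mul', ← zetaLogSeries_add_zetaLogSeries_neg hr
    (by rw [norm_pow]; exact pow_lt_one₀ (norm_nonneg a) ha hr)]
  rcases eq_or_ne r 1 with rfl | hr1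
  · simp only [pow_one] at hab
    subst hab
    rw [ell_one ha, ell_one (by rwa [norm_neg]), neg_neg, pow_one]
    ring
  · rw [ell_of_ne_one hr1, ell_of_ne_one hr1, hab, neg_neg]
    ring

/-- Let `r ≥ 1`, let `ρ` be a complex number with `ρ^{2r} = −1`, and let `ξ` be a
primitive `2r`-th root of unity. Then for every complex `z` with `|z| < 1`,
`exp(ℓ_{2r}(z)) = exp(ℓ_r(ρ·z)) · exp(ℓ_r(ρ·ξ·z))`. -/
theorem stmt11 (r : ℕ) (hr : 1 ≤ r) (ρ ξ : ℂ) (hρ : ρ ^ (2 * r) = -1)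
    (hξ : IsPrimitiveRoot ξ (2 * r)) (z : ℂ) (hz : ‖z‖ < 1) :
    Complex.exp (ell (2 * r) z) =
      Complex.exp (ell r (ρ * z)) * Complex.exp (ell r (ρ * ξ * z)) := by
  have hr0 : r ≠ 0 := Nat.one_le_iff_ne_zero.mp hr
  have hρ_norm : ‖ρ‖ = 1 :=
    norm_eq_one_of_pow_eq_one (n := 2 * r * 2) (by rw [pow_mul, hρ]; norm_num) (by omega)
  have hξr : ξ ^ r = -1 := by
    have := hξ.pow_of_dvd hr0 (dvd_mul_left r 2)
    rw [Nat.mul_div_cancel _ (Nat.pos_of_ne_zero hr0)] at this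
    exact this.eq_neg_one_of_two_right
  have hρz : ‖ρ * z‖ < 1 := by rwa [norm_mul, hρ_norm, one_mul]
  have hpow : (ρ * ξ * z) ^ r = -(ρ * z) ^ r := by
    rw [mul_right_comm, mul_pow _ ξ, hξr, mul_neg_one]
  rw [← Complex.exp_add, ell_add_ell_of_pow_eq_neg_pow hr0 hρz hpow, ell_of_ne_one (by omega),
    mul_pow, hρ, neg_one_mul]
end

section
/- For every complex number z with 0 < |z| < 1, exp(−Σ_{n≥1} ζ(2n)·z^{2n}/n) = sin(π·z)/(π·z), where the series Σ_{n≥1} ζ(2n)·z^{2n}/n converges absolutely for |z| < 1. -/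
/-!
Expanding `ζ(2n) = ∑_{k ≥ 1} k^{-2n}` turns the series into the double series
`∑_{n ≥ 1} ∑_{k ≥ 1} (z²/k²)^n / n`, which converges absolutely for `‖z‖ < 1`, being dominated
by `∑_n ‖z‖^{2n} · ∑_k ‖z‖²/k²`. Summing over `n` first gives `-∑_k log (1 - z²/k²)`, so the
exponential of minus the series is `∏_k (1 - z²/k²)`, which is Euler's product for
`sin (π z) / (π z)`.
-/

open Real Complex Filter

lemma riemannZeta_natCast_mul_pow {m : ℕ} (hm : 1 < m) (z : ℂ) :
    riemannZeta m * z ^ m = ∑' k : ℕ, (z / (k + 1)) ^ m := by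
  have hre : 1 < (m : ℂ).re := by simpa using hm
  rw [zeta_eq_tsum_one_div_nat_add_one_cpow hre, ← tsum_mul_right]
  refine tsum_congr fun k => ?_
  rw [cpow_natCast, div_pow]
  ring

lemma one_le_norm_natCast_add_one (k : ℕ) : 1 ≤ ‖(k : ℂ) + 1‖ := by
  rw [← Nat.cast_add_one, Complex.norm_natCast]
  exact_mod_cast k.succ_pos

lemma norm_div_natCast_add_one_pow_le (x : ℂ) (k q : ℕ) : ‖x / ((k : ℂ) + 1) ^ q‖ ≤ ‖x‖ := by
  rw [norm_div, norm_pow]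
  exact div_le_self (norm_nonneg x) (one_le_pow₀ (one_le_norm_natCast_add_one k))

/-- The `(n, k)` term of `-∑_k log (1 - z² / (k+1)²) = ∑_k ∑_n (z² / (k+1)²)^(n+1) / (n+1)`. -/
noncomputable def logSineDoubleTerm (z : ℂ) (p : ℕ × ℕ) : ℂ :=
  (z ^ 2 / ((p.2 : ℂ) + 1) ^ 2) ^ (p.1 + 1) / ((p.1 : ℂ) + 1)

lemma norm_logSineDoubleTerm_le (z : ℂ) (p : ℕ × ℕ) :
    ‖logSineDoubleTerm z p‖ ≤ (‖z‖ ^ 2) ^ p.1 * ‖z ^ 2 / ((p.2 : ℂ) + 1) ^ 2‖ := by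
  set w := z ^ 2 / ((p.2 : ℂ) + 1) ^ 2
  have hw : ‖w‖ ≤ ‖z‖ ^ 2 := (norm_div_natCast_add_one_pow_le _ _ _).trans_eq (norm_pow z 2)
  calc ‖logSineDoubleTerm z p‖
      ≤ ‖w‖ ^ (p.1 + 1) := by
        rw [logSineDoubleTerm, norm_div, norm_pow]
        exact div_le_self (by positivity) (one_le_norm_natCast_add_one p.1)
    _ = ‖w‖ ^ p.1 * ‖w‖ := pow_succ _ _
    _ ≤ (‖z‖ ^ 2) ^ p.1 * ‖w‖ := by gcongr

lemma summable_norm_logSineDoubleTerm {z : ℂ} (hz : ‖z‖ < 1) :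
    Summable fun p => ‖logSineDoubleTerm z p‖ := by
  have hz2 : ‖z‖ ^ 2 < 1 := pow_lt_one₀ (norm_nonneg z) hz two_ne_zero
  have hbound := (summable_geometric_of_lt_one (by positivity) hz2).mul_of_nonneg
    (summable_pow_div_add (z ^ 2) 2 1 one_lt_two) (fun _ => by positivity) (fun _ => by positivity)
  refine hbound.of_nonneg_of_le (fun _ => norm_nonneg _) fun p => ?_
  simpa using norm_logSineDoubleTerm_le z p

lemma norm_sineTerm_lt_one {z : ℂ} (hz : ‖z‖ < 1) (k : ℕ) : ‖sineTerm z k‖ < 1 := by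
  rw [sineTerm, neg_div, norm_neg]
  refine (norm_div_natCast_add_one_pow_le _ _ _).trans_lt ?_
  simpa using pow_lt_one₀ (norm_nonneg z) hz two_ne_zero

lemma one_add_sineTerm_ne_zero_of_norm_lt_one {z : ℂ} (hz : ‖z‖ < 1) (k : ℕ) :
    1 + sineTerm z k ≠ 0 := by
  intro h
  simpa [eq_neg_of_add_eq_zero_right h] using norm_sineTerm_lt_one hz k

lemma hasSum_logSineDoubleTerm_fiber {z : ℂ} (hz : ‖z‖ < 1) (k : ℕ) :
    HasSum (fun n => logSineDoubleTerm z (n, k)) (-log (1 + sineTerm z k)) := by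
  have hw : ‖-sineTerm z k‖ < 1 := by simpa using norm_sineTerm_lt_one hz k
  simpa [logSineDoubleTerm, sineTerm, neg_div, ← sub_eq_add_neg] using
    hasSum_taylorSeries_neg_log' hw

lemma riemannZeta_two_mul_succ_term_eq_tsum (z : ℂ) (n : ℕ) :
    riemannZeta (2 * ((n : ℂ) + 1)) * z ^ (2 * (n + 1)) / ((n : ℂ) + 1) =
      ∑' k : ℕ, logSineDoubleTerm z (n, k) := by
  have hcast : 2 * ((n : ℂ) + 1) = ((2 * (n + 1) : ℕ) : ℂ) := by push_cast; ring
  rw [hcast, riemannZeta_natCast_mul_pow (by omega), ← tsum_div_const]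
  refine tsum_congr fun k => ?_
  rw [logSineDoubleTerm, pow_mul, div_pow]

lemma HasSum.hasProd_of_cexp_eq {ι : Type*} {f a : ι → ℂ} {s : ℂ} (hs : HasSum f s)
    (hf : ∀ i, Complex.exp (f i) = a i) : HasProd a (Complex.exp s) := by
  simpa [Function.comp_def, hf] using hs.cexp

lemma hasProd_one_add_sineTerm {z : ℂ} (hz : z ≠ 0) :
    HasProd (fun k => 1 + sineTerm z k) (sin (π * z) / (π * z)) :=
  ((multipliable_sineTerm z).hasProd_iff_tendsto_nat).mpr (tendsto_euler_sin_prod' hz)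

/-- For every complex `z` with `0 < |z| < 1`,
`exp(−Σ_{n≥1} ζ(2n)·z^{2n}/n) = sin(π·z)/(π·z)`, the series converging absolutely
for `|z| < 1`. -/
theorem stmt12 (z : ℂ) (hz0 : z ≠ 0) (hz : ‖z‖ < 1) :
    Summable (fun n : ℕ =>
      ‖riemannZeta (2 * ((n : ℂ) + 1)) * z ^ (2 * (n + 1)) / ((n : ℂ) + 1)‖) ∧
    Complex.exp (-∑' n : ℕ,
        riemannZeta (2 * ((n : ℂ) + 1)) * z ^ (2 * (n + 1)) / ((n : ℂ) + 1)) =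
      Complex.sin ((π : ℂ) * z) / ((π : ℂ) * z) := by
  have hnorm := summable_norm_logSineDoubleTerm hz
  have hsum := hnorm.of_norm
  simp_rw [riemannZeta_two_mul_succ_term_eq_tsum]
  refine ⟨hnorm.prod.of_nonneg_of_le (fun _ => norm_nonneg _)
    fun n => norm_tsum_le_tsum_norm (hnorm.prod_factor n), ?_⟩
  have hrows : HasSum (fun n => ∑' k, logSineDoubleTerm z (n, k)) (∑' p, logSineDoubleTerm z p) :=
    hsum.hasSum.prod_fiberwise fun n => (hsum.prod_factor n).hasSum
  have hcols : HasSum (fun k => log (1 + sineTerm z k)) (-∑' p, logSineDoubleTerm z p) := by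
    have hswap := (Equiv.prodComm ℕ ℕ).hasSum_iff.mpr hsum.hasSum
    simpa using (hswap.prod_fiberwise (hasSum_logSineDoubleTerm_fiber hz)).neg
  rw [hrows.tsum_eq]
  have hprod := hcols.hasProd_of_cexp_eq fun k =>
    exp_log (one_add_sineTerm_ne_zero_of_norm_lt_one hz k)
  exact hprod.unique (hasProd_one_add_sineTerm hz0)
end

section
/- Let ρ be a complex number with ρ^4 = −1. Then for every complex number z with 0 < |z| < 1, exp(−Σ_{k≥1} ζ(4k)·(−1)^k·z^{4k}/k) = (sin(i·ρ·π·z)/(i·ρ·π·z)) · (sin(ρ·π·z)/(ρ·π·z)), where the series Σ_{k≥1} ζ(4k)·(−1)^k·z^{4k}/k converges absolutely for |z| < 1. -/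
/-!
Taking logarithms in Euler's product `sin (π w) / (π w) = ∏ (1 - w² / n²)` and expanding each
`-log (1 - w² / n²)` as `∑ₖ w^{2k} / (k n^{2k})` gives an absolutely convergent double series for
`‖w‖ < 1`; summing it over `n` first yields `∑ₖ ζ(2k) w^{2k} / k`, so
`exp (-∑ₖ ζ(2k) w^{2k} / k) = sin (π w) / (π w)`.
Add this identity for `w = ρ z` and `w = i ρ z`: since `i^{2k} = (-1)^k`, the terms with `k` odd
cancel and those with `k` even double, and `(ρ z)^{4k} = (-1)^k z^{4k}` because `ρ⁴ = -1`.
-/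

open Real

noncomputable def zetaLogTerm (w : ℂ) (k : ℕ) : ℂ :=
  riemannZeta (2 * ((k : ℂ) + 1)) * w ^ (2 * (k + 1)) / ((k : ℂ) + 1)

noncomputable def sineLogTerm (w : ℂ) (p : ℕ × ℕ) : ℂ :=
  (w ^ 2 / ((p.2 : ℂ) + 1) ^ 2) ^ (p.1 + 1) / ((p.1 : ℂ) + 1)

lemma hasSum_one_div_nat_add_one_pow_riemannZeta {k : ℕ} (hk : 1 < k) :
    HasSum (fun n : ℕ => 1 / ((n : ℂ) + 1) ^ k) (riemannZeta k) := by
  have hsum : Summable (fun n : ℕ => 1 / ((n : ℂ) + 1) ^ k) := by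
    simpa using (summable_pow_div_add (1 : ℂ) k 1 hk).of_norm
  convert hsum.hasSum using 1
  rw [zeta_eq_tsum_one_div_nat_add_one_cpow (by simpa using hk)]
  simp_rw [Complex.cpow_natCast]

lemma norm_eq_one_of_pow_eq_neg_one {𝕜 : Type*} [NormedDivisionRing 𝕜] {ρ : 𝕜} {n : ℕ}
    (hn : n ≠ 0) (hρ : ρ ^ n = -1) : ‖ρ‖ = 1 := by
  rw [← pow_left_inj₀ (norm_nonneg ρ) zero_le_one hn, ← norm_pow, hρ]
  simp

lemma Complex.mem_integerComplement_of_norm_lt_one {w : ℂ} (hw0 : w ≠ 0) (hw : ‖w‖ < 1) :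
    w ∈ Complex.integerComplement := by
  rintro ⟨n, rfl⟩
  have hn : |n| < 1 := by
    rwa [Complex.norm_intCast, ← Int.cast_abs, ← Int.cast_one, Int.cast_lt] at hw
  simp [Int.abs_lt_one_iff.mp hn] at hw0

lemma HasSum.comp_odd_of_even_eq_zero {M : Type*} [AddCommMonoid M] [TopologicalSpace M]
    {f : ℕ → M} {a : M} (hf : HasSum f a) (h0 : ∀ k, f (2 * k) = 0) :
    HasSum (fun k => f (2 * k + 1)) a := by
  refine (Function.Injective.hasSum_iff (g := fun k => 2 * k + 1)
    (fun a b h => by simpa using h) ?_).mpr hf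
  rintro n hn
  obtain ⟨k, rfl | rfl⟩ := Nat.even_or_odd' n
  · exact h0 k
  · exact absurd ⟨k, rfl⟩ hn

lemma norm_sineLogTerm_le (w : ℂ) (k n : ℕ) :
    ‖sineLogTerm w (k, n)‖ ≤ (‖w‖ ^ 2) ^ (k + 1) * (1 / ((n : ℝ) + 1) ^ 2) := by
  have hn : 1 / ((n : ℝ) + 1) ^ 2 ≤ 1 :=
    div_le_one_of_le₀ (by nlinarith [n.cast_nonneg (α := ℝ)]) (by positivity)
  have hk : (1 : ℝ) ≤ (k : ℝ) + 1 := by linarith [k.cast_nonneg (α := ℝ)]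
  calc ‖sineLogTerm w (k, n)‖
      = (‖w‖ ^ 2) ^ (k + 1) * (1 / ((n : ℝ) + 1) ^ 2) ^ (k + 1) / ((k : ℝ) + 1) := by
        simp only [sineLogTerm, norm_div, norm_pow, ← mul_pow]
        norm_cast
        simp [div_eq_mul_inv]
    _ ≤ (‖w‖ ^ 2) ^ (k + 1) * (1 / ((n : ℝ) + 1) ^ 2) ^ (k + 1) :=
        div_le_self (by positivity) hk
    _ ≤ (‖w‖ ^ 2) ^ (k + 1) * (1 / ((n : ℝ) + 1) ^ 2) := by
        gcongr
        exact pow_le_of_le_one (by positivity) hn (by omega)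

lemma hasSum_sineLogTerm_zetaLogTerm (w : ℂ) (k : ℕ) :
    HasSum (fun n => sineLogTerm w (k, n)) (zetaLogTerm w k) := by
  have h := (hasSum_one_div_nat_add_one_pow_riemannZeta (k := 2 * (k + 1)) (by omega)).mul_right
    (w ^ (2 * (k + 1)) / ((k : ℂ) + 1))
  have hzeta : zetaLogTerm w k =
      riemannZeta ((2 * (k + 1) : ℕ) : ℂ) * (w ^ (2 * (k + 1)) / ((k : ℂ) + 1)) := by
    rw [zetaLogTerm, mul_div_assoc]
    push_cast
    ring
  rw [hzeta]
  refine h.congr_fun fun n => ?_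
  simp only [sineLogTerm, div_pow, ← pow_mul]
  ring

lemma zetaLogTerm_even_add_I_mul (w : ℂ) (k : ℕ) :
    zetaLogTerm w (2 * k) + zetaLogTerm (Complex.I * w) (2 * k) = 0 := by
  have hI : (Complex.I * w) ^ (2 * (2 * k + 1)) = -w ^ (2 * (2 * k + 1)) := by
    rw [mul_pow, pow_mul, Complex.I_sq, Odd.neg_one_pow (odd_two_mul_add_one k), neg_one_mul]
  simp only [zetaLogTerm, hI]
  ring

lemma zetaLogTerm_odd_add_I_mul (w : ℂ) (k : ℕ) :
    zetaLogTerm w (2 * k + 1) + zetaLogTerm (Complex.I * w) (2 * k + 1) =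
      riemannZeta (4 * ((k : ℂ) + 1)) * w ^ (4 * (k + 1)) / ((k : ℂ) + 1) := by
  have hexp : 2 * (2 * k + 1 + 1) = 4 * (k + 1) := by ring
  have hI : (Complex.I * w) ^ (4 * (k + 1)) = w ^ (4 * (k + 1)) := by
    rw [mul_pow, pow_mul, Complex.I_pow_four, one_pow, one_mul]
  have hcast : ((2 * k + 1 : ℕ) : ℂ) + 1 = 2 * ((k : ℂ) + 1) := by push_cast; ring
  have hk : (k : ℂ) + 1 ≠ 0 := Nat.cast_add_one_ne_zero k
  simp only [zetaLogTerm, hexp, hI, hcast, ← mul_assoc, show (2 * 2 : ℂ) = 4 by norm_num]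
  field_simp
  ring

section

variable {w : ℂ}

lemma summable_norm_sineLogTerm (hw : ‖w‖ < 1) : Summable (‖sineLogTerm w ·‖) := by
  have hgeom : Summable (fun k : ℕ => (‖w‖ ^ 2) ^ (k + 1)) :=
    (summable_geometric_of_lt_one (by positivity) (by nlinarith [norm_nonneg w])).comp_injective
      (add_left_injective 1)
  have hzeta : Summable (fun n : ℕ => 1 / ((n : ℝ) + 1) ^ 2) := by
    simpa using summable_pow_div_add (1 : ℝ) 2 1 one_lt_two
  exact (hgeom.mul_of_nonneg hzeta (fun _ => by positivity) (fun _ => by positivity))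
    |>.of_nonneg_of_le (fun _ => norm_nonneg _) fun ⟨k, n⟩ => norm_sineLogTerm_le w k n

lemma hasSum_sineLogTerm_neg_log (hw : ‖w‖ < 1) (n : ℕ) :
    HasSum (fun k => sineLogTerm w (k, n)) (-Complex.log (1 + sineTerm w n)) := by
  have hq : ‖w ^ 2 / ((n : ℂ) + 1) ^ 2‖ < 1 := by
    have h1 : (1 : ℝ) ≤ ‖((n : ℂ) + 1) ^ 2‖ := by
      rw [← Nat.cast_add_one, norm_pow, Complex.norm_natCast]
      exact one_le_pow₀ (by simp)
    rw [norm_div, norm_pow]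
    exact (div_le_self (by positivity) h1).trans_lt (by nlinarith [norm_nonneg w])
  have h1 : 1 + sineTerm w n = 1 - w ^ 2 / ((n : ℂ) + 1) ^ 2 := by
    simp only [sineTerm, neg_div, sub_eq_add_neg]
  rw [h1]
  exact (Complex.hasSum_taylorSeries_neg_log' hq).congr_fun fun _ => rfl

lemma summable_norm_zetaLogTerm (hw : ‖w‖ < 1) : Summable (‖zetaLogTerm w ·‖) := by
  have hF := summable_norm_sineLogTerm hw
  refine hF.prod.of_nonneg_of_le (fun _ => norm_nonneg _) fun k => ?_
  rw [← (hasSum_sineLogTerm_zetaLogTerm w k).tsum_eq]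
  exact norm_tsum_le_tsum_norm (hF.prod_factor k)

lemma hasSum_log_one_add_sineTerm (hw : ‖w‖ < 1) :
    HasSum (fun n => Complex.log (1 + sineTerm w n)) (-∑' k, zetaLogTerm w k) := by
  have hF := (summable_norm_sineLogTerm hw).of_norm.hasSum
  have hzeta := hF.prod_fiberwise (hasSum_sineLogTerm_zetaLogTerm w)
  have hlog := ((Equiv.prodComm ℕ ℕ).hasSum_iff.mpr hF).prod_fiberwise
    (hasSum_sineLogTerm_neg_log hw)
  simpa [hzeta.tsum_eq] using hlog.neg

theorem exp_neg_tsum_zetaLogTerm (hw0 : w ≠ 0) (hw : ‖w‖ < 1) :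
    Complex.exp (-∑' k, zetaLogTerm w k) = Complex.sin (π * w) / (π * w) := by
  have hw' := Complex.mem_integerComplement_of_norm_lt_one hw0 hw
  have hexp := (hasSum_log_one_add_sineTerm hw).cexp
  simp only [Function.comp_def, Complex.exp_log (sineTerm_ne_zero hw' _)] at hexp
  rw [← euler_sineTerm_tprod hw']
  exact hexp.tprod_eq.symm

lemma summable_norm_zetaLogTerm_odd_add_I_mul (hw : ‖w‖ < 1) :
    Summable (fun k => ‖zetaLogTerm w (2 * k + 1) + zetaLogTerm (Complex.I * w) (2 * k + 1)‖) :=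
  ((summable_norm_zetaLogTerm hw).add (summable_norm_zetaLogTerm (w := Complex.I * w)
    (by simpa using hw))).of_nonneg_of_le (fun _ => norm_nonneg _) (fun _ => norm_add_le _ _)
    |>.comp_injective fun a b h => by simpa using h

lemma hasSum_zetaLogTerm_odd_add_I_mul (hw : ‖w‖ < 1) :
    HasSum (fun k => zetaLogTerm w (2 * k + 1) + zetaLogTerm (Complex.I * w) (2 * k + 1))
      (∑' k, zetaLogTerm w k + ∑' k, zetaLogTerm (Complex.I * w) k) :=
  ((summable_norm_zetaLogTerm hw).of_norm.hasSum.add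
    (summable_norm_zetaLogTerm (w := Complex.I * w) (by simpa using hw)).of_norm.hasSum)
    |>.comp_odd_of_even_eq_zero (zetaLogTerm_even_add_I_mul w)

end

/-- Let `ρ` be a complex number with `ρ^4 = −1`. For every complex `z` with
`0 < |z| < 1`,
`exp(−Σ_{k≥1} ζ(4k)·(−1)^k·z^{4k}/k) = (sin(i·ρ·π·z)/(i·ρ·π·z))·(sin(ρ·π·z)/(ρ·π·z))`,
the series converging absolutely for `|z| < 1`. -/
theorem stmt13 (ρ : ℂ) (hρ : ρ ^ 4 = -1) (z : ℂ) (hz0 : z ≠ 0) (hz : ‖z‖ < 1) :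
    Summable (fun k : ℕ =>
      ‖riemannZeta (4 * ((k : ℂ) + 1)) * (-1 : ℂ) ^ (k + 1) * z ^ (4 * (k + 1)) /
        ((k : ℂ) + 1)‖) ∧
    Complex.exp (-∑' k : ℕ,
        riemannZeta (4 * ((k : ℂ) + 1)) * (-1 : ℂ) ^ (k + 1) * z ^ (4 * (k + 1)) /
          ((k : ℂ) + 1)) =
      (Complex.sin (Complex.I * ρ * (π : ℂ) * z) / (Complex.I * ρ * (π : ℂ) * z)) *
        (Complex.sin (ρ * (π : ℂ) * z) / (ρ * (π : ℂ) * z)) := by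
  have hρ1 : ‖ρ‖ = 1 := norm_eq_one_of_pow_eq_neg_one four_ne_zero hρ
  have hw : ‖ρ * z‖ < 1 := by simpa [hρ1] using hz
  have hw0 : ρ * z ≠ 0 := mul_ne_zero (norm_ne_zero_iff.mp (by simp [hρ1])) hz0
  have hterm (k : ℕ) : riemannZeta (4 * ((k : ℂ) + 1)) * (-1 : ℂ) ^ (k + 1) * z ^ (4 * (k + 1)) /
      ((k : ℂ) + 1) =
        zetaLogTerm (ρ * z) (2 * k + 1) + zetaLogTerm (Complex.I * (ρ * z)) (2 * k + 1) := by
    rw [zetaLogTerm_odd_add_I_mul, mul_pow, pow_mul ρ, hρ]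
    ring
  simp only [hterm]
  refine ⟨summable_norm_zetaLogTerm_odd_add_I_mul hw, ?_⟩
  rw [(hasSum_zetaLogTerm_odd_add_I_mul hw).tsum_eq, neg_add, Complex.exp_add,
    exp_neg_tsum_zetaLogTerm hw0 hw,
    exp_neg_tsum_zetaLogTerm (mul_ne_zero Complex.I_ne_zero hw0) (by simpa using hw)]
  rw [show (π : ℂ) * (ρ * z) = ρ * π * z by ring,
    show (π : ℂ) * (Complex.I * (ρ * z)) = Complex.I * ρ * π * z by ring, mul_comm]
end

section
/- For every integer k ≥ 1, the multiple zeta value ζ(2,2,…,2) with k repetitions of the index 2 satisfies ζ({2}^k) = π^{2k}/(2k+1)!; that is, Σ_{n₁>n₂>…>n_k≥1} 1/(n₁²·n₂²⋯n_k²) = π^{2k}/(2k+1)!. -/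
/-!
Euler's product gives `sinh (π x) / (π x) = ∏_{n ≥ 1} (1 + x² / n²)`. Expanding the product
over finite sets of positive integers and grouping the sets by cardinality yields
`∑ₖ ζ({2}ᵏ) x^{2k}`, while the Taylor series of `sinh` yields `∑ₖ π^{2k} / (2k+1)! · x^{2k}`.
Both are power series in `t = x²` agreeing for `t > 0`; since the zeros of a nonzero power
series are isolated, their coefficients coincide.
-/

open Filter Topology Finset Real

theorem hasFPowerSeriesAt_tsum_mul_pow {𝕜 : Type*} [NontriviallyNormedField 𝕜] [CompleteSpace 𝕜]
    {c : ℕ → 𝕜} {r : NNReal} (hr : 0 < r) (hc : Summable fun k => ‖c k‖ * (r : ℝ) ^ k) :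
    HasFPowerSeriesAt (fun t => ∑' k, c k * t ^ k) (FormalMultilinearSeries.ofScalars 𝕜 c) 0 := by
  have hrad := (FormalMultilinearSeries.ofScalars 𝕜 c).le_radius_of_summable_norm
    (r := r) (by simpa using hc)
  convert ((FormalMultilinearSeries.ofScalars 𝕜 c).hasFPowerSeriesOnBall
    ((ENNReal.coe_pos.2 hr).trans_le hrad)).hasFPowerSeriesAt using 1
  exact (FormalMultilinearSeries.ofScalarsSum_eq_tsum c).symm

theorem eq_of_tsum_mul_pow_eq_on_Ioo {a b : ℕ → ℝ} {r : NNReal} (hr : 0 < r)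
    (ha : Summable fun k => ‖a k‖ * (r : ℝ) ^ k) (hb : Summable fun k => ‖b k‖ * (r : ℝ) ^ k)
    (h : ∀ t ∈ Set.Ioo (0 : ℝ) r, ∑' k, a k * t ^ k = ∑' k, b k * t ^ k) : a = b := by
  refine FormalMultilinearSeries.ofScalars_series_injective ℝ ℝ (sub_eq_zero.1 ?_)
  by_contra hne
  have hne_zero := ((hasFPowerSeriesAt_tsum_mul_pow hr ha).sub
    (hasFPowerSeriesAt_tsum_mul_pow hr hb)).locally_ne_zero hne
  have hIoo : ∀ᶠ t in 𝓝[>] (0 : ℝ), t ∈ Set.Ioo (0 : ℝ) r := Ioo_mem_nhdsGT (by exact_mod_cast hr)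
  obtain ⟨t, ht, hne_t⟩ := (hIoo.and (hne_zero.filter_mono (nhdsGT_le_nhdsNE 0))).exists
  exact hne_t (sub_eq_zero.2 (h t ht))

theorem hasSum_prod_of_hasProd_one_add {ι : Type*} {f : ι → ℝ} (hf : ∀ i, 0 ≤ f i) {a : ℝ}
    (h : HasProd (fun i => 1 + f i) a) : HasSum (fun s : Finset ι => ∏ i ∈ s, f i) a := by
  classical
  have hnonneg (s : Finset ι) : 0 ≤ ∏ i ∈ s, f i := prod_nonneg fun i _ => hf i
  have hmono : Monotone fun T : Finset ι => ∏ i ∈ T, (1 + f i) := fun S T hST => by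
    simp only [prod_one_add]
    exact sum_le_sum_of_subset_of_nonneg (powerset_mono.2 hST) fun s _ _ => hnonneg s
  refine hasSum_of_isLUB_of_nonneg a hnonneg ⟨?_, fun b hb => ?_⟩
  · rintro _ ⟨A, rfl⟩
    calc ∑ s ∈ A, ∏ i ∈ s, f i
        ≤ ∑ s ∈ (A.sup id).powerset, ∏ i ∈ s, f i :=
          sum_le_sum_of_subset_of_nonneg (fun s hs => mem_powerset.2 (le_sup (f := id) hs))
            fun s _ _ => hnonneg s
      _ = ∏ i ∈ A.sup id, (1 + f i) := (prod_one_add _).symm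
      _ ≤ a := hmono.ge_of_tendsto h _
  · refine le_of_tendsto' h fun T => ?_
    rw [prod_one_add]
    exact hb ⟨T.powerset, rfl⟩

theorem hasProd_one_add_sq_div_sq (x : ℝ) (hx : x ≠ 0) :
    HasProd (fun n : ℕ => 1 + x ^ 2 / ((n : ℝ) + 1) ^ 2) (sinh (π * x) / (π * x)) := by
  have hmult : Multipliable fun n : ℕ => 1 + x ^ 2 / ((n : ℝ) + 1) ^ 2 := by
    apply multipliable_one_add_of_summable
    simpa only [Nat.cast_one] using summable_pow_div_add (x ^ 2) 2 1 one_lt_two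
  rw [hmult.hasProd_iff_tendsto_nat, ← tendsto_ofReal_iff]
  have hxI : (x : ℂ) * Complex.I ≠ 0 := by simp [hx]
  have hprod (n : ℕ) : ∏ i ∈ range n, (1 + sineTerm (x * Complex.I) i)
      = ((∏ i ∈ range n, (1 + x ^ 2 / ((i : ℝ) + 1) ^ 2) : ℝ) : ℂ) := by
    push_cast
    refine prod_congr rfl fun i _ => ?_
    simp only [sineTerm, mul_pow, Complex.I_sq]
    ring
  have hsinh : Complex.sin (π * (x * Complex.I)) / (π * (x * Complex.I))
      = ((sinh (π * x) / (π * x) : ℝ) : ℂ) := by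
    rw [← mul_assoc, Complex.sin_mul_I, mul_div_mul_right _ _ Complex.I_ne_zero]
    push_cast
    rfl
  simpa only [hprod, hsinh] using tendsto_euler_sin_prod' hxI

theorem hasSum_sinh_div (y : ℝ) (hy : y ≠ 0) :
    HasSum (fun k : ℕ => y ^ (2 * k) / (2 * k + 1).factorial) (sinh y / y) := by
  refine ((hasSum_sinh y).div_const y).congr_fun fun k => ?_
  rw [pow_succ]
  field_simp

def strictAntiPosEquiv (k : ℕ) :
    {f : Fin k → ℕ // StrictAnti f ∧ ∀ i, 0 < f i} ≃ (Fin k ↪o ℕ) where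
  toFun f := OrderEmbedding.ofStrictMono (fun i => f.1 i.rev - 1) fun i _ hij =>
    Nat.sub_lt_sub_right (f.2.2 i.rev) (f.2.1 (Fin.rev_lt_rev.2 hij))
  invFun g := ⟨fun i => g i.rev + 1, fun i j hij => by simpa using Fin.rev_lt_rev.2 hij,
    fun i => Nat.succ_pos _⟩
  left_inv f := by
    ext i
    show f.1 i.rev.rev - 1 + 1 = f.1 i
    rw [Fin.rev_rev]
    exact Nat.sub_add_cancel (f.2.2 i)
  right_inv g := by
    ext i
    simp

def strictAntiPosEquivPowersetCard (k : ℕ) :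
    {f : Fin k → ℕ // StrictAnti f ∧ ∀ i, 0 < f i} ≃ Set.powersetCard ℕ k :=
  (strictAntiPosEquiv k).trans Set.powersetCard.ofFinEmbEquiv

theorem prod_strictAntiPosEquivPowersetCard {M : Type*} [CommMonoid M] {k : ℕ} (g : ℕ → M)
    (f : {f : Fin k → ℕ // StrictAnti f ∧ ∀ i, 0 < f i}) :
    ∏ n ∈ (strictAntiPosEquivPowersetCard k f : Finset ℕ), g (n + 1) = ∏ i, g (f.1 i) := by
  rw [strictAntiPosEquivPowersetCard, Equiv.trans_apply, Set.powersetCard.ofFinEmbEquiv_apply,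
    Set.powersetCard.val_ofFinEmb, prod_map]
  refine Fintype.prod_equiv Fin.revPerm _ _ fun i => ?_
  show g (f.1 i.rev - 1 + 1) = g (f.1 i.rev)
  rw [Nat.sub_add_cancel (f.2.2 i.rev)]

noncomputable def zetaTwos (k : ℕ) : ℝ :=
  ∑' n : {f : Fin k → ℕ // StrictAnti f ∧ ∀ i, 0 < f i}, ∏ i : Fin k, (1 : ℝ) / (n.1 i : ℝ) ^ 2

theorem zetaTwos_eq_tsum_powersetCard (k : ℕ) :
    zetaTwos k = ∑' s : Set.powersetCard ℕ k, ∏ n ∈ (s : Finset ℕ), 1 / ((n : ℝ) + 1) ^ 2 := by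
  rw [zetaTwos, ← (strictAntiPosEquivPowersetCard k).tsum_eq]
  refine tsum_congr fun f => ?_
  simpa only [Nat.cast_add, Nat.cast_one] using
    (prod_strictAntiPosEquivPowersetCard (fun n => 1 / (n : ℝ) ^ 2) f).symm

theorem hasSum_zetaTwos_mul_pow (x : ℝ) (hx : x ≠ 0) :
    HasSum (fun k => zetaTwos k * (x ^ 2) ^ k) (sinh (π * x) / (π * x)) := by
  have hfactor (k : ℕ) (s : Set.powersetCard ℕ k) :
      ∏ n ∈ (s : Finset ℕ), x ^ 2 / ((n : ℝ) + 1) ^ 2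
        = (x ^ 2) ^ k * ∏ n ∈ (s : Finset ℕ), 1 / ((n : ℝ) + 1) ^ 2 := by
    simp_rw [div_eq_mul_one_div (x ^ 2)]
    rw [prod_mul_distrib, prod_const, Set.powersetCard.card_eq s]
  have hsets := hasSum_prod_of_hasProd_one_add (fun n => by positivity)
    (hasProd_one_add_sq_div_sq x hx)
  have hsigma := Set.powersetCard.prodEquiv.hasSum_iff.2 hsets
  simp only [Function.comp_def, Set.powersetCard.prodEquiv_apply, hfactor] at hsigma
  refine hsigma.sigma fun k => ?_
  have hfiber := (summable_mul_left_iff (pow_ne_zero k (pow_ne_zero 2 hx))).1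
    (hsigma.summable.sigma_factor k)
  rw [zetaTwos_eq_tsum_powersetCard, mul_comm]
  exact hfiber.hasSum.mul_left _

theorem hasSum_pi_pow_div_factorial_mul_pow (x : ℝ) (hx : x ≠ 0) :
    HasSum (fun k : ℕ => π ^ (2 * k) / (2 * k + 1).factorial * (x ^ 2) ^ k)
      (sinh (π * x) / (π * x)) :=
  (hasSum_sinh_div (π * x) (mul_ne_zero pi_ne_zero hx)).congr_fun fun k => by
    rw [mul_pow, pow_mul x, div_mul_eq_mul_div]

theorem stmt14_general (k : ℕ) :
    ∑' n : {f : Fin k → ℕ // StrictAnti f ∧ ∀ i, 0 < f i},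
      ∏ i : Fin k, (1 : ℝ) / (n.1 i : ℝ) ^ 2
      = Real.pi ^ (2 * k) / (Nat.factorial (2 * k + 1) : ℝ) := by
  have hcoeff : zetaTwos = fun k : ℕ => π ^ (2 * k) / (2 * k + 1).factorial := by
    refine eq_of_tsum_mul_pow_eq_on_Ioo one_pos ?_ ?_ fun t ht => ?_
    · simpa only [Real.norm_eq_abs, NNReal.coe_one, one_pow, mul_one] using
        (hasSum_zetaTwos_mul_pow 1 one_ne_zero).summable.abs
    · simpa only [Real.norm_eq_abs, NNReal.coe_one, one_pow, mul_one] using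
        (hasSum_pi_pow_div_factorial_mul_pow 1 one_ne_zero).summable.abs
    · obtain ⟨x, hx, rfl⟩ : ∃ x : ℝ, 0 < x ∧ x ^ 2 = t := ⟨√t, sqrt_pos.2 ht.1, sq_sqrt ht.1.le⟩
      rw [(hasSum_zetaTwos_mul_pow x hx.ne').tsum_eq,
        (hasSum_pi_pow_div_factorial_mul_pow x hx.ne').tsum_eq]
  exact congrFun hcoeff k

/-- For every integer `k ≥ 1`, the multiple zeta value `ζ(2,…,2)` (`k` twos),
i.e. the sum over strictly decreasing `k`-tuples of positive integers
`n₁ > … > n_k ≥ 1` of `1/(n₁²⋯n_k²)`, equals `π^{2k}/(2k+1)!`. -/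
theorem stmt14 (k : ℕ) (hk : 1 ≤ k) :
    ∑' n : {f : Fin k → ℕ // StrictAnti f ∧ ∀ i, 0 < f i},
      ∏ i : Fin k, (1 : ℝ) / (n.1 i : ℝ) ^ 2
      = Real.pi ^ (2 * k) / (Nat.factorial (2 * k + 1) : ℝ) :=
  stmt14_general k
end

section
/- Let s₁,…,s_r be positive integers and let z be a complex number with |z| < 1. Then (1/(1−z))·Li_{s₁,…,s_r}(z) = Σ_{N≥0} H_{s₁,…,s_r}(N)·z^N, where the right-hand series converges absolutely for |z| < 1. -/
/-! Since `∑_{k ≥ 0} z^k = 1/(1 - z)`, the product `Li(z)/(1 - z)` is the double series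
`∑_{n, k} a_n z^{n₁ + k}` with `a_n = ∏ n_i^{-s_i} ≤ 1`. Grouping its terms by `N = n₁ + k`
collects exactly the `a_n` with `n₁ ≤ N`, that is `H(N)`. The rearrangement is justified by
absolute convergence: as `n₁` is the largest entry, `|z|^{n₁} ≤ ∏ᵢ |z|^{nᵢ/r}`, and the right-hand
side sums to a product of `r` geometric series. -/

open Finset

lemma summable_prod_fin_of_nonneg {β : Type*} {g : β → ℝ} (hg : Summable g) (hg0 : 0 ≤ g) :
    ∀ n : ℕ, Summable (fun f : Fin n → β => ∏ i, g (f i))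
  | 0 => by simpa using (Summable.of_finite : Summable fun _ : Fin 0 → β => (1 : ℝ))
  | n + 1 => by
    refine (Equiv.summable_iff (Fin.consEquiv fun _ => β)).mp ?_
    refine (hg.mul_of_nonneg (summable_prod_fin_of_nonneg hg hg0 n) hg0
      fun f => prod_nonneg fun i _ => hg0 _).congr ?_
    rintro ⟨b, f⟩
    simp [Fin.prod_univ_succ]

lemma summable_pow_apply_of_forall_le {r : ℕ} {x : ℝ} (hx0 : 0 ≤ x) (hx1 : x < 1) (i₀ : Fin r)
    {P : (Fin r → ℕ) → Prop} (hP : ∀ f, P f → ∀ i, f i ≤ f i₀) :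
    Summable (fun f : {f // P f} => x ^ f.1 i₀) := by
  have hr : r ≠ 0 := i₀.pos.ne'
  set w := x ^ ((r : ℝ)⁻¹)
  have hw0 : 0 ≤ w := Real.rpow_nonneg hx0 _
  have hw1 : w ≤ 1 := Real.rpow_le_one hx0 hx1.le (by positivity)
  have hprod : Summable (fun f : Fin r → ℕ => ∏ i, w ^ f i) :=
    summable_prod_fin_of_nonneg (summable_geometric_of_lt_one hw0
      (Real.rpow_lt_one hx0 hx1 (by positivity))) (fun k => pow_nonneg hw0 k) r
  refine (hprod.subtype _).of_nonneg_of_le (fun f => pow_nonneg hx0 _) fun ⟨f, hf⟩ => ?_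
  calc x ^ f i₀ = ∏ _i : Fin r, w ^ f i₀ := by
        rw [prod_const, card_univ, Fintype.card_fin, ← pow_mul, mul_comm, pow_mul,
          Real.rpow_inv_natCast_pow hx0 hr]
    _ ≤ ∏ i, w ^ f i := prod_le_prod (fun _ _ => pow_nonneg hw0 _) fun i _ =>
        pow_le_pow_of_le_one hw0 hw1 (hP f hf i)

lemma one_div_natCast_pow_le_one (n s : ℕ) : 1 / (n : ℝ) ^ s ≤ 1 := by
  rcases n.eq_zero_or_pos with rfl | hn
  · rcases s.eq_zero_or_pos with rfl | hs
    · simp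
    · simp [zero_pow hs.ne']
  · exact div_le_one_of_le₀ (one_le_pow₀ (by exact_mod_cast hn)) (by positivity)

def Equiv.prodNatEquivSigmaLE {ι : Type*} (h : ι → ℕ) : ι × ℕ ≃ Σ N : ℕ, {i // h i ≤ N} where
  toFun p := ⟨h p.1 + p.2, p.1, Nat.le_add_right _ _⟩
  invFun q := (q.2.1, q.1 - h q.2.1)
  left_inv p := by simp
  right_inv := fun ⟨N, i, hi⟩ => Sigma.subtype_ext (Nat.add_sub_cancel' hi) rfl

section GeometricProduct

variable {ι : Type*} {a : ι → ℝ} {h : ι → ℕ} {z : ℂ}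

lemma summable_norm_mul_pow_add (ha : ∀ i, 0 ≤ a i) (hz : ‖z‖ < 1)
    (hsum : Summable fun i => a i * ‖z‖ ^ h i) :
    Summable fun p : ι × ℕ => ‖(a p.1 : ℂ) * z ^ (h p.1 + p.2)‖ := by
  refine (hsum.mul_of_nonneg (summable_geometric_of_lt_one (norm_nonneg z) hz)
    (fun i => mul_nonneg (ha i) (by positivity)) fun k => by positivity).congr fun p => ?_
  simp [pow_add, abs_of_nonneg (ha p.1), mul_assoc]

lemma norm_ofReal_tsum_mul_pow (ha : ∀ i, 0 ≤ a i) (N : ℕ) :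
    ‖((∑' i : {i // h i ≤ N}, a i : ℝ) : ℂ) * z ^ N‖ =
      ∑' i : {i // h i ≤ N}, ‖(a i : ℂ) * z ^ N‖ := by
  simp only [norm_mul, Complex.norm_real, Real.norm_of_nonneg (ha _), tsum_mul_right]
  rw [Real.norm_of_nonneg (tsum_nonneg fun i : {i // h i ≤ N} => ha i)]

theorem summable_and_inv_one_sub_mul_tsum_eq (ha : ∀ i, 0 ≤ a i) (hz : ‖z‖ < 1)
    (hsum : Summable fun i => a i * ‖z‖ ^ h i) :
    (Summable fun N : ℕ => ‖((∑' i : {i // h i ≤ N}, a i : ℝ) : ℂ) * z ^ N‖) ∧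
      (1 - z)⁻¹ * ∑' i, (a i : ℂ) * z ^ h i =
        ∑' N : ℕ, ((∑' i : {i // h i ≤ N}, a i : ℝ) : ℂ) * z ^ N := by
  set F : (Σ N : ℕ, {i // h i ≤ N}) → ℂ := fun q => a q.2 * z ^ q.1
  set e := Equiv.prodNatEquivSigmaLE h
  have hG : Summable fun p => ‖F (e p)‖ := summable_norm_mul_pow_add ha hz hsum
  have hF : Summable fun q => ‖F q‖ := e.summable_iff.mp hG
  refine ⟨(hF.sigma).congr fun N => (norm_ofReal_tsum_mul_pow ha N).symm, ?_⟩
  calc (1 - z)⁻¹ * ∑' i, (a i : ℂ) * z ^ h i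
      = ∑' i, ∑' k, F (e (i, k)) := by
        rw [← tsum_mul_left]
        refine tsum_congr fun i => ?_
        simp only [F, e, Equiv.prodNatEquivSigmaLE, Equiv.coe_fn_mk, pow_add, tsum_mul_left,
          tsum_geometric_of_norm_lt_one hz]
        ring
    _ = ∑' q, F q := by rw [← (Summable.of_norm hG).tsum_prod, e.tsum_eq]
    _ = _ := by
        rw [(Summable.of_norm hF).tsum_sigma]
        refine tsum_congr fun N => ?_
        rw [Complex.ofReal_tsum, ← tsum_mul_right]

end GeometricProduct

theorem stmt19_general (r : ℕ) (hr : 1 ≤ r) (s : Fin r → ℕ)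
    (z : ℂ) (hz : ‖z‖ < 1) :
    Summable (fun N : ℕ =>
      ‖((∑' n : {f : Fin r → ℕ // StrictAnti f ∧ (∀ i, 0 < f i) ∧ f ⟨0, hr⟩ ≤ N},
            ∏ i : Fin r, (1 : ℝ) / (n.1 i : ℝ) ^ (s i) : ℝ) : ℂ) * z ^ N‖) ∧
    (1 / (1 - z)) *
        (∑' n : {f : Fin r → ℕ // StrictAnti f ∧ ∀ i, 0 < f i},
          z ^ (n.1 ⟨0, hr⟩) / ∏ i : Fin r, ((n.1 i : ℂ)) ^ (s i)) =
      ∑' N : ℕ,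
        ((∑' n : {f : Fin r → ℕ // StrictAnti f ∧ (∀ i, 0 < f i) ∧ f ⟨0, hr⟩ ≤ N},
            ∏ i : Fin r, (1 : ℝ) / (n.1 i : ℝ) ^ (s i) : ℝ) : ℂ) * z ^ N := by
  set w : (Fin r → ℕ) → ℝ := fun f => ∏ i, (1 : ℝ) / (f i : ℝ) ^ (s i)
  have hw0 : ∀ f, 0 ≤ w f := fun f => prod_nonneg fun i _ => by positivity
  have hsum : Summable fun f : {f : Fin r → ℕ // StrictAnti f ∧ ∀ i, 0 < f i} =>
      w f.1 * ‖z‖ ^ f.1 ⟨0, hr⟩ :=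
    (summable_pow_apply_of_forall_le (norm_nonneg z) hz ⟨0, hr⟩
      fun f hf i => hf.1.antitone (Nat.zero_le i.1)).of_nonneg_of_le
      (fun f => mul_nonneg (hw0 f) (by positivity))
      fun f => mul_le_of_le_one_left (by positivity)
        (prod_le_one (fun i _ => by positivity) fun i _ => one_div_natCast_pow_le_one _ _)
  have hpartial : ∀ N, ∑' f : {f : {f : Fin r → ℕ // StrictAnti f ∧ ∀ i, 0 < f i} //
      f.1 ⟨0, hr⟩ ≤ N}, w f.1.1 =
        ∑' n : {f : Fin r → ℕ // StrictAnti f ∧ (∀ i, 0 < f i) ∧ f ⟨0, hr⟩ ≤ N}, w n.1 :=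
    fun N => ((Equiv.subtypeSubtypeEquivSubtypeInter _ fun f => f ⟨0, hr⟩ ≤ N).trans
      (Equiv.subtypeEquivRight fun _ => and_assoc)).tsum_eq (w ∘ Subtype.val)
  have hLi : ∀ n : {f : Fin r → ℕ // StrictAnti f ∧ ∀ i, 0 < f i},
      z ^ n.1 ⟨0, hr⟩ / ∏ i, (n.1 i : ℂ) ^ s i = (w n.1 : ℂ) * z ^ n.1 ⟨0, hr⟩ := fun n => by
    simp only [w, Complex.ofReal_prod, Complex.ofReal_div, Complex.ofReal_one,
      Complex.ofReal_pow, Complex.ofReal_natCast, prod_div_distrib, prod_const_one]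
    ring
  obtain ⟨hconv, heq⟩ := summable_and_inv_one_sub_mul_tsum_eq
    (a := fun f : {f : Fin r → ℕ // StrictAnti f ∧ ∀ i, 0 < f i} => w f.1)
    (h := fun f => f.1 ⟨0, hr⟩) (fun f => hw0 f.1) hz hsum
  simp only [hpartial] at hconv heq
  exact ⟨hconv, by rw [tsum_congr hLi, one_div, heq]⟩

/-- Let `s₁,…,s_r` be positive integers and `z` complex with `|z| < 1`. Then
`(1/(1−z))·Li_{s₁,…,s_r}(z) = Σ_{N≥0} H_{s₁,…,s_r}(N)·z^N`, the right-hand series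
converging absolutely for `|z| < 1`. Here
`Li_{s₁,…,s_r}(z) = Σ_{n₁>…>n_r≥1} z^{n₁}/(n₁^{s₁}⋯n_r^{s_r})` and
`H_{s₁,…,s_r}(N) = Σ_{N≥n₁>…>n_r≥1} 1/(n₁^{s₁}⋯n_r^{s_r})`. -/
theorem stmt19 (r : ℕ) (hr : 1 ≤ r) (s : Fin r → ℕ) (hs : ∀ i, 0 < s i)
    (z : ℂ) (hz : ‖z‖ < 1) :
    Summable (fun N : ℕ =>
      ‖((∑' n : {f : Fin r → ℕ // StrictAnti f ∧ (∀ i, 0 < f i) ∧ f ⟨0, hr⟩ ≤ N},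
            ∏ i : Fin r, (1 : ℝ) / (n.1 i : ℝ) ^ (s i) : ℝ) : ℂ) * z ^ N‖) ∧
    (1 / (1 - z)) *
        (∑' n : {f : Fin r → ℕ // StrictAnti f ∧ ∀ i, 0 < f i},
          z ^ (n.1 ⟨0, hr⟩) / ∏ i : Fin r, ((n.1 i : ℂ)) ^ (s i)) =
      ∑' N : ℕ,
        ((∑' n : {f : Fin r → ℕ // StrictAnti f ∧ (∀ i, 0 < f i) ∧ f ⟨0, hr⟩ ≤ N},
            ∏ i : Fin r, (1 : ℝ) / (n.1 i : ℝ) ^ (s i) : ℝ) : ℂ) * z ^ N :=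
  stmt19_general r hr s z hz
end
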